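/- arXiv:2504.01226 — 8 statements merged into one kernel-verified Lean document; each statement's English description precedes it below -/
import Mathlib

section
/- Let n be a positive integer, and for 1 ≤ i ≤ n let b_i ≥ 1 be integers, l_i integers with 0 ≤ l_i ≤ b_i/2, and η_i ∈ {1,−1}. Put δ_i := ∏_{j=1}^{i−1} (−1)^{b_j−1} and μ_i := δ_i · η_i · (b_i − 2l_i). Then ∏_{i=1}^{n} (−1)^{⌊b_i/2⌋ + l_i} · η_i^{b_i} = 1 if and only if Σ_{i=1}^{n} ( ⌊μ_i/2⌋ + μ_i · Σ_{j=1}^{i−1} (b_j − 1) ) ≡ 0 (mod 2). -/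
private lemma term_parity (bi li S e c : ℕ) (hc : c + 2 * li = bi) (he : e = 0 ∨ e = 1) :
    (((-1 : ℤ) ^ (S + e) * (c : ℤ)).fdiv 2
      + (-1 : ℤ) ^ (S + e) * (c : ℤ) * (S : ℤ)) % 2
    = ((bi / 2 + li + e * bi : ℕ) : ℤ) % 2 := by
  have h2 : (0:ℤ) ≤ 2 := by norm_num
  rcases Nat.even_or_odd (S + e) with h | h
  · rw [h.neg_one_pow, one_mul, Int.fdiv_eq_ediv_of_nonneg _ h2]
    rcases he with rfl | rfl
    · obtain ⟨k, hk⟩ := h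
      have hS : (S : ℤ) = 2 * (k : ℤ) := by omega
      have hmul : (c:ℤ) * (S:ℤ) = 2 * ((c:ℤ) * (k:ℤ)) := by rw [hS]; ring
      rw [hmul]
      generalize (c:ℤ) * (k:ℤ) = t
      omega
    · obtain ⟨k, hk⟩ := h
      have hS : (S : ℤ) = 2 * (k : ℤ) - 1 := by omega
      have hmul : (c:ℤ) * (S:ℤ) = 2 * ((c:ℤ) * (k:ℤ)) - (c:ℤ) := by rw [hS]; ring
      rw [hmul]
      generalize (c:ℤ) * (k:ℤ) = t
      omega
  · rw [h.neg_one_pow, neg_one_mul, Int.fdiv_eq_ediv_of_nonneg _ h2]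
    rcases he with rfl | rfl
    · obtain ⟨k, hk⟩ := h
      have hS : (S : ℤ) = 2 * (k : ℤ) + 1 := by omega
      have hmul : -(c:ℤ) * (S:ℤ) = 2 * (-((c:ℤ) * (k:ℤ))) - (c:ℤ) := by rw [hS]; ring
      rw [hmul]
      generalize -((c:ℤ) * (k:ℤ)) = t
      rcases Nat.even_or_odd c with ⟨m, hm⟩ | ⟨m, hm⟩
      · have hdiv : (-(c:ℤ))/2 = -(m:ℤ) := by omega
        rw [hdiv]; omega
      · have hdiv : (-(c:ℤ))/2 = -(m:ℤ)-1 := by omega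
        rw [hdiv]; omega
    · obtain ⟨k, hk⟩ := h
      have hS : (S : ℤ) = 2 * (k : ℤ) := by omega
      have hmul : -(c:ℤ) * (S:ℤ) = 2 * (-((c:ℤ) * (k:ℤ))) := by rw [hS]; ring
      rw [hmul]
      generalize -((c:ℤ) * (k:ℤ)) = t
      rcases Nat.even_or_odd c with ⟨m, hm⟩ | ⟨m, hm⟩
      · have hdiv : (-(c:ℤ))/2 = -(m:ℤ) := by omega
        rw [hdiv]; omega
      · have hdiv : (-(c:ℤ))/2 = -(m:ℤ)-1 := by omega
        rw [hdiv]; omega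

/-- The sign condition in Atobe's `(l, η)`-parametrization of extended multi-segments,
`∏ i, (-1)^(⌊b i / 2⌋ + l i) * (η i)^(b i) = 1`, is equivalent, under the change of
parameters `μ i = δ i * η i * (b i - 2 * l i)` with `δ i = ∏_{j < i} (-1)^(b j - 1)`,
to the sign condition `∑ i, (⌊μ i / 2⌋ + μ i * ∑_{j < i} (b j - 1)) ≡ 0 (mod 2)` in the
`μ`-parametrization. -/
theorem stmt_0 (n : ℕ) (hn : 1 ≤ n) (b l : ℕ → ℕ) (η : ℕ → ℤ)
    (hb : ∀ i, i < n → 1 ≤ b i)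
    (hl : ∀ i, i < n → 2 * l i ≤ b i)
    (hη : ∀ i, i < n → η i = 1 ∨ η i = -1)
    (δ μ : ℕ → ℤ)
    (hδ : ∀ i, δ i = ∏ j ∈ Finset.range i, (-1 : ℤ) ^ (b j - 1))
    (hμ : ∀ i, μ i = δ i * η i * ((b i : ℤ) - 2 * (l i : ℤ))) :
    (∏ i ∈ Finset.range n, ((-1 : ℤ) ^ (b i / 2 + l i) * η i ^ b i)) = 1 ↔
      (∑ i ∈ Finset.range n,
        ((μ i).fdiv 2 + μ i * ∑ j ∈ Finset.range i, ((b j : ℤ) - 1))) % 2 = 0 := by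
  set E : ℕ → ℕ := fun i => if η i = 1 then 0 else 1 with hE
  have hηE : ∀ i, i < n → η i = (-1 : ℤ) ^ E i := by
    intro i hi
    rcases hη i hi with h | h <;> simp [hE, h]
  -- the left side as a single power of -1
  have hL : (∏ i ∈ Finset.range n, ((-1 : ℤ) ^ (b i / 2 + l i) * η i ^ b i))
      = (-1 : ℤ) ^ (∑ i ∈ Finset.range n, (b i / 2 + l i + E i * b i)) := by
    rw [← Finset.prod_pow_eq_pow_sum]
    refine Finset.prod_congr rfl ?_
    intro i hi
    rw [hηE i (Finset.mem_range.mp hi), ← pow_mul, ← pow_add]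
  -- per-term parity congruence for the right side
  have key : ∀ i ∈ Finset.range n,
      ((μ i).fdiv 2 + μ i * ∑ j ∈ Finset.range i, ((b j : ℤ) - 1)) % 2
      = ((b i / 2 + l i + E i * b i : ℕ) : ℤ) % 2 := by
    intro i hi
    have hi' := Finset.mem_range.mp hi
    have hsum : (∑ j ∈ Finset.range i, ((b j : ℤ) - 1))
        = ((∑ j ∈ Finset.range i, (b j - 1) : ℕ) : ℤ) := by
      rw [Nat.cast_sum]
      refine Finset.sum_congr rfl ?_
      intro j hj
      have := hb j (lt_trans (Finset.mem_range.mp hj) hi')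
      omega
    have hδi : δ i = (-1:ℤ) ^ (∑ j ∈ Finset.range i, (b j - 1)) := by
      rw [hδ i, Finset.prod_pow_eq_pow_sum]
    have hc : (b i : ℤ) - 2 * (l i : ℤ) = ((b i - 2 * l i : ℕ) : ℤ) := by
      have := hl i hi'; omega
    have hμi : μ i = (-1:ℤ) ^ ((∑ j ∈ Finset.range i, (b j - 1)) + E i)
        * ((b i - 2 * l i : ℕ) : ℤ) := by
      rw [hμ i, hδi, hηE i hi', hc, pow_add]
    rw [hμi, hsum]
    refine term_parity (b i) (l i) _ (E i) (b i - 2 * l i) (by have := hl i hi'; omega) ?_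
    rcases hη i hi' with h | h <;> simp [hE, h]
  have hR : (∑ i ∈ Finset.range n,
        ((μ i).fdiv 2 + μ i * ∑ j ∈ Finset.range i, ((b j : ℤ) - 1))) % 2
      = ((∑ i ∈ Finset.range n, (b i / 2 + l i + E i * b i) : ℕ) : ℤ) % 2 := by
    rw [Finset.sum_int_mod, Finset.sum_congr rfl key, ← Finset.sum_int_mod, ← Nat.cast_sum]
  rw [hL, hR, neg_one_pow_eq_one_iff_even (by norm_num : (-1:ℤ) ≠ 1), Nat.even_iff]
  generalize (∑ i ∈ Finset.range n, (b i / 2 + l i + E i * b i)) = N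
  omega
end

section
/- If a homogeneous extended multi-segment 𝒮 belongs to Rep, then every reordering 𝒮′ ∈ [𝒮] is again a homogeneous extended multi-segment; that is, every element of the reordering class [𝒮] satisfies |μ_i| ≤ b_i for all i. -/
/-- An extended segment `([A,B], μ)` with half-integer endpoints and integer parameter `μ`. -/
structure ExtSeg where
  A : ℚ
  B : ℚ
  mu : ℤ

namespace ExtSeg

/-- `b = A - B + 1`. -/
def segb (S : ExtSeg) : ℚ := S.A - S.B + 1

/-- `a = A + B + 1`. -/
def sega (S : ExtSeg) : ℚ := S.A + S.B + 1

/-- `μ̂ = μ` if `B ∈ ℤ`, and `μ - 1` otherwise. -/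
def muHat (S : ExtSeg) : ℤ := if S.B.den = 1 then S.mu else S.mu - 1

end ExtSeg

/-- A homogeneous formal extended multi-segment of length `n`, encoded as a function
`ℕ → ExtSeg` whose relevant entries are those with index `< n`:
half-integral endpoints, `A_i - B_i ∈ ℤ_{≥0}`, `A_i + B_i ≥ 0`, a common integrality
class for all the `A_i`, parity `μ_i ≡ b_i (mod 2)`, and admissible order. -/
def IsFormalEMS (n : ℕ) (S : ℕ → ExtSeg) : Prop :=
  (∀ i, i < n → ∃ k : ℤ, 2 * (S i).A = (k : ℚ)) ∧
  (∀ i, i < n → ∃ k : ℕ, (S i).A - (S i).B = (k : ℚ)) ∧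
  (∀ i, i < n → 0 ≤ (S i).A + (S i).B) ∧
  (∀ i, i < n → ∀ j, j < n → ∃ k : ℤ, (S i).A - (S j).A = (k : ℚ)) ∧
  (∀ i, i < n → ∃ k : ℤ, ((S i).mu : ℚ) - (S i).segb = 2 * (k : ℚ)) ∧
  (∀ i, i < n → ∀ j, j < n → (S j).A < (S i).A → (S j).B < (S i).B → j < i)

/-- A homogeneous extended multi-segment: a formal one with moreover `|μ_i| ≤ b_i`. -/
def IsEMS (n : ℕ) (S : ℕ → ExtSeg) : Prop :=
  IsFormalEMS n S ∧ ∀ i, i < n → |((S i).mu : ℚ)| ≤ (S i).segb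

/-- Replace the entries at positions `i` and `i+1` by `x` and `y`. -/
def swapAt (S : ℕ → ExtSeg) (i : ℕ) (x y : ExtSeg) : ℕ → ExtSeg :=
  fun j => if j = i then x else if j = i + 1 then y else S j

/-- One reorder `R_i` (at some position `i` with `i + 1 < n`). -/
def ReorderStep (n : ℕ) (S S' : ℕ → ExtSeg) : Prop :=
  ∃ i, i + 1 < n ∧
    (((S i).A ≤ (S (i+1)).A ∧ (S (i+1)).B ≤ (S i).B ∧
        S' = swapAt S i ⟨(S (i+1)).A, (S (i+1)).B, 2 * (S i).mu - (S (i+1)).mu⟩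
                        ⟨(S i).A, (S i).B, (S i).mu⟩) ∨
     ((S (i+1)).A ≤ (S i).A ∧ (S i).B ≤ (S (i+1)).B ∧
        S' = swapAt S i ⟨(S (i+1)).A, (S (i+1)).B, (S (i+1)).mu⟩
                        ⟨(S i).A, (S i).B, 2 * (S (i+1)).mu - (S i).mu⟩) ∨
     ((S i).A ≤ (S (i+1)).A ∧ (S i).B ≤ (S (i+1)).B ∧ S' = S))

/-- `𝒮'` is a reordering of `𝒮`: it is obtained by a finite sequence of reorders. -/
def Reorder (n : ℕ) : (ℕ → ExtSeg) → (ℕ → ExtSeg) → Prop :=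
  Relation.ReflTransGen (ReorderStep n)

/-- The necessary condition (nec):
`|A_{i+1} - A_i| + |B_{i+1} - B_i| ≥ |μ_{i+1} - μ_i|` for consecutive entries. -/
def Nec (n : ℕ) (S : ℕ → ExtSeg) : Prop :=
  ∀ i, i + 1 < n →
    |((S (i+1)).mu : ℚ) - ((S i).mu : ℚ)| ≤
      |(S (i+1)).A - (S i).A| + |(S (i+1)).B - (S i).B|

/-- Admissibility: if some `B_i < 0`, then `B_i > B_j` implies `i > j`. -/
def IsAdmissible (n : ℕ) (S : ℕ → ExtSeg) : Prop :=
  (∃ i, i < n ∧ (S i).B < 0) →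
    ∀ i, i < n → ∀ j, j < n → (S j).B < (S i).B → j < i

/-- Standard: `B_i < B_j`, or `B_i = B_j` and `A_i > A_j`, implies `i < j`. -/
def IsStandard (n : ℕ) (S : ℕ → ExtSeg) : Prop :=
  ∀ i, i < n → ∀ j, j < n →
    ((S i).B < (S j).B ∨ ((S i).B = (S j).B ∧ (S j).A < (S i).A)) → i < j

/-- Membership in `Rep`: an admissible homogeneous extended multi-segment all of whose
reorderings satisfy (nec), and with `|μ̂_i| ≤ a_i` for all `i`. -/
def InRep (n : ℕ) (S : ℕ → ExtSeg) : Prop :=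
  IsEMS n S ∧ IsAdmissible n S ∧
  (∀ S', Reorder n S S' → Nec n S') ∧
  (∀ i, i < n → |((S i).muHat : ℚ)| ≤ (S i).sega)

/-- Membership in `SRep`: standard and in `Rep`. -/
def InSRep (n : ℕ) (S : ℕ → ExtSeg) : Prop :=
  IsStandard n S ∧ InRep n S

/-- `S_i ∼ S_j` (`i < j`) are connected: no `k` with `i < k < j` and
`A_i ≥ A_k ≥ A_j` or `A_i < A_k < A_j`. -/
def Connected (n : ℕ) (S : ℕ → ExtSeg) (i j : ℕ) : Prop :=
  i < j ∧ j < n ∧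
    ¬ ∃ k, i < k ∧ k < j ∧
      (((S j).A ≤ (S k).A ∧ (S k).A ≤ (S i).A) ∨
       ((S i).A < (S k).A ∧ (S k).A < (S j).A))

/-- `Δ_𝒮(μ_i, μ_j)` for `i < j`. -/
def Delta (S : ℕ → ExtSeg) (i j : ℕ) : ℤ :=
  ∑ m ∈ Finset.Ico i j,
    (-1 : ℤ) ^ ((Finset.Ioo m j).filter (fun k => (S k).A ≤ (S i).A)).card *
      ((S (m+1)).mu - (S m).mu)

/-- An extended segment `([C,D],ν)` compatible with `𝒮`. -/
def Compatible (n : ℕ) (S : ℕ → ExtSeg) (T : ExtSeg) : Prop :=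
  (∃ k : ℤ, 2 * T.A = (k : ℚ)) ∧
  (∃ k : ℕ, T.A - T.B = (k : ℚ)) ∧
  0 ≤ T.A + T.B ∧
  (∀ i, i < n → ∃ k : ℤ, T.A - (S i).A = (k : ℚ)) ∧
  (∃ k : ℤ, (T.mu : ℚ) - T.segb = 2 * (k : ℚ)) ∧
  |(T.mu : ℚ)| ≤ T.segb

/-- The (0-based) insertion position of `([C,D],ν)` into the standard `𝒮`:
the number of indices `k` with `B_k < D`, or `B_k = D` and `A_k ≥ C`. -/
def insertPos (n : ℕ) (S : ℕ → ExtSeg) (T : ExtSeg) : ℕ :=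
  ((Finset.range n).filter
    (fun k => (S k).B < T.B ∨ ((S k).B = T.B ∧ T.A ≤ (S k).A))).card

/-- The insertion `𝒮_{([C,D],ν)}`: insert `T` twice at the consecutive positions
`insertPos n S T` and `insertPos n S T + 1`; the result has length `n + 2`. -/
def insertTwice (n : ℕ) (S : ℕ → ExtSeg) (T : ExtSeg) : ℕ → ExtSeg :=
  fun j =>
    if j < insertPos n S T then S j
    else if j = insertPos n S T ∨ j = insertPos n S T + 1 then T
    else S (j - 2)

private lemma formal_swap (n i : ℕ) (S : ℕ → ExtSeg) (hi : i + 1 < n)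
    (hF : IsFormalEMS n S) (m1 m2 : ℤ)
    (hm1 : ∃ k : ℤ, (m1 : ℚ) - ((S (i+1)).A - (S (i+1)).B + 1) = 2 * (k : ℚ))
    (hm2 : ∃ k : ℤ, (m2 : ℚ) - ((S i).A - (S i).B + 1) = 2 * (k : ℚ))
    (hAB : (S (i+1)).B ≤ (S i).B ∨ (S (i+1)).A ≤ (S i).A) :
    IsFormalEMS n (swapAt S i ⟨(S (i+1)).A, (S (i+1)).B, m1⟩ ⟨(S i).A, (S i).B, m2⟩) := by
  obtain ⟨h1, h2, h3, h4, h5, h6⟩ := hF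
  set σ : ℕ → ℕ := fun j => if j = i then i+1 else if j = i+1 then i else j with hσdef
  set S' := swapAt S i ⟨(S (i+1)).A, (S (i+1)).B, m1⟩ ⟨(S i).A, (S i).B, m2⟩ with hS'
  have hA : ∀ j, (S' j).A = (S (σ j)).A := by
    intro j; simp only [hS', hσdef, swapAt]; split_ifs <;> rfl
  have hB : ∀ j, (S' j).B = (S (σ j)).B := by
    intro j; simp only [hS', hσdef, swapAt]; split_ifs <;> rfl
  have hσlt : ∀ j, j < n → σ j < n := by
    intro j hj; simp only [hσdef]; split_ifs <;> omega
  refine ⟨?_, ?_, ?_, ?_, ?_, ?_⟩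
  · intro j hj; rw [hA]; exact h1 (σ j) (hσlt j hj)
  · intro j hj; rw [hA, hB]; exact h2 (σ j) (hσlt j hj)
  · intro j hj; rw [hA, hB]; exact h3 (σ j) (hσlt j hj)
  · intro j hj k hk; rw [hA, hA]; exact h4 (σ j) (hσlt j hj) (σ k) (hσlt k hk)
  · intro j hj
    by_cases hji : j = i
    · have hv : S' j = ⟨(S (i+1)).A, (S (i+1)).B, m1⟩ := by
        simp [hS', swapAt, hji]
      rw [hv]; exact hm1
    · by_cases hji' : j = i + 1
      · have hv : S' j = ⟨(S i).A, (S i).B, m2⟩ := by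
          simp [hS', swapAt, hji, hji']
        rw [hv]; exact hm2
      · have hv : S' j = S j := by simp [hS', swapAt, hji, hji']
        rw [hv]; exact h5 j hj
  · intro p hp q hq hAq hBq
    rw [hA, hA] at hAq
    rw [hB, hB] at hBq
    by_cases hcase : q = i + 1 ∧ p = i
    · exfalso
      obtain ⟨hq1, hp1⟩ := hcase
      rw [hq1, hp1] at hAq hBq
      have e1 : σ i = i + 1 := by simp [hσdef]
      have e2 : σ (i+1) = i := by simp [hσdef]
      rw [e1, e2] at hAq hBq
      rcases hAB with hh | hh
      · exact absurd hBq (not_lt.2 hh)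
      · exact absurd hAq (not_lt.2 hh)
    · have hlt : σ q < σ p := h6 (σ p) (hσlt p hp) (σ q) (hσlt q hq) hAq hBq
      simp only [hσdef] at hlt
      split_ifs at hlt <;> omega

private lemma step_preserve (n : ℕ) (S S' : ℕ → ExtSeg) (hE : IsEMS n S) (hN : Nec n S)
    (hstep : ReorderStep n S S') : IsEMS n S' := by
  obtain ⟨hF, hb⟩ := hE
  obtain ⟨i, hin, hcase⟩ := hstep
  have hnec := hN i hin
  have hbi := hb i (by omega)
  have hbi1 := hb (i+1) hin
  have hpar := hF.2.2.2.2.1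
  unfold ExtSeg.segb at hbi hbi1
  rcases hcase with ⟨hA, hB, rfl⟩ | ⟨hA, hB, rfl⟩ | ⟨hA, hB, rfl⟩
  · -- case 1: new entry at position i is ⟨A_{i+1}, B_{i+1}, 2μ_i - μ_{i+1}⟩
    have hnec' : |((S (i+1)).mu : ℚ) - (S i).mu| ≤
        ((S (i+1)).A - (S i).A) + ((S i).B - (S (i+1)).B) := by
      have e1 : |(S (i+1)).A - (S i).A| = (S (i+1)).A - (S i).A :=
        abs_of_nonneg (by linarith)
      have e2 : |(S (i+1)).B - (S i).B| = (S i).B - (S (i+1)).B := by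
        rw [abs_of_nonpos (by linarith)]; ring
      rw [e1, e2] at hnec; exact hnec
    constructor
    · apply formal_swap n i S hin hF
      · obtain ⟨k, hk⟩ := hpar (i+1) hin
        unfold ExtSeg.segb at hk
        exact ⟨k + (S i).mu - (S (i+1)).mu, by push_cast at hk ⊢; linarith⟩
      · obtain ⟨k, hk⟩ := hpar i (by omega)
        unfold ExtSeg.segb at hk
        exact ⟨k, by push_cast at hk ⊢; linarith⟩
      · left; exact hB
    · intro j hj
      unfold ExtSeg.segb
      by_cases hji : j = i
      · subst hji
        simp only [swapAt, if_pos rfl]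
        push_cast
        rw [abs_le] at hbi ⊢
        rw [abs_le] at hnec'
        constructor <;> push_cast at hnec' ⊢ <;> linarith [hnec'.1, hnec'.2]
      · by_cases hji' : j = i + 1
        · subst hji'
          have hne : i + 1 ≠ i := by omega
          simp only [swapAt, if_neg hne, if_pos rfl]
          exact hbi
        · simp only [swapAt, if_neg hji, if_neg hji']
          exact hb j hj
  · -- case 2: new entry at position i+1 is ⟨A_i, B_i, 2μ_{i+1} - μ_i⟩
    have hnec' : |((S (i+1)).mu : ℚ) - (S i).mu| ≤
        ((S i).A - (S (i+1)).A) + ((S (i+1)).B - (S i).B) := by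
      have e1 : |(S (i+1)).A - (S i).A| = (S i).A - (S (i+1)).A := by
        rw [abs_of_nonpos (by linarith)]; ring
      have e2 : |(S (i+1)).B - (S i).B| = (S (i+1)).B - (S i).B :=
        abs_of_nonneg (by linarith)
      rw [e1, e2] at hnec; exact hnec
    constructor
    · apply formal_swap n i S hin hF
      · obtain ⟨k, hk⟩ := hpar (i+1) hin
        unfold ExtSeg.segb at hk
        exact ⟨k, by push_cast at hk ⊢; linarith⟩
      · obtain ⟨k, hk⟩ := hpar i (by omega)
        unfold ExtSeg.segb at hk
        exact ⟨k + (S (i+1)).mu - (S i).mu, by push_cast at hk ⊢; linarith⟩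
      · right; exact hA
    · intro j hj
      unfold ExtSeg.segb
      by_cases hji : j = i
      · subst hji
        simp only [swapAt, if_pos rfl]
        exact hbi1
      · by_cases hji' : j = i + 1
        · subst hji'
          have hne : i + 1 ≠ i := by omega
          simp only [swapAt, if_neg hne, if_pos rfl]
          push_cast
          rw [abs_le] at hbi1 ⊢
          rw [abs_le] at hnec'
          constructor <;> push_cast at hnec' ⊢ <;> linarith [hnec'.1, hnec'.2]
        · simp only [swapAt, if_neg hji, if_neg hji']
          exact hb j hj
  · exact ⟨hF, hb⟩

/-- If a homogeneous extended multi-segment `𝒮` belongs to `Rep`, then every reordering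
`𝒮' ∈ [𝒮]` is again a homogeneous extended multi-segment; in particular every element of
the reordering class satisfies `|μ_i| ≤ b_i` for all `i`. -/
theorem stmt_2 (n : ℕ) (S : ℕ → ExtSeg) (h : InRep n S) :
    ∀ S', Reorder n S S' → IsEMS n S' := by
  intro S' hr
  induction hr with
  | refl => exact h.1
  | tail hb hbc ih =>
    exact step_preserve n _ _ ih (h.2.2.1 _ hb) hbc
end

section
/- Let 𝒮 = (([A_i,B_i],μ_i))_{i=1}^{n} and 𝒮′ = (([A_i′,B_i′],μ_i′))_{i=1}^{n} be homogeneous formal extended multi-segments that are reorderings of each other (𝒮 ∼ 𝒮′), with 𝒮 ∈ Rep, and suppose A_i = A_i′ and B_i = B_i′ for all 1 ≤ i ≤ n (the underlying segments appear in the same order). Then μ_i = μ_i′ for all 1 ≤ i ≤ n; i.e. the μ-parameters are well-defined for a given reordering of the extended multi-segment. -/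
/-! ### Auxiliary development for `stmt_4` -/

namespace Stmt4

/-- Strict containment of the segment with endpoints `(xA, xB)` in the segment of `v`. -/
def SsubAB (xA xB : ℚ) (v : ExtSeg) : Prop :=
  v.B ≤ xB ∧ xA ≤ v.A ∧ ¬(xA = v.A ∧ xB = v.B)

/-- Strict containment of the segment of `x` in the segment of `v`. -/
def Ssub (x v : ExtSeg) : Prop := SsubAB x.A x.B v

/-- Equality of underlying segments. -/
def SegEq (x v : ExtSeg) : Prop := x.A = v.A ∧ x.B = v.B

instance (xA xB : ℚ) (v : ExtSeg) : Decidable (SsubAB xA xB v) :=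
  inferInstanceAs (Decidable (_ ∧ _ ∧ _))
instance (x v : ExtSeg) : Decidable (Ssub x v) :=
  inferInstanceAs (Decidable (SsubAB _ _ _))
instance (x v : ExtSeg) : Decidable (SegEq x v) :=
  inferInstanceAs (Decidable (_ ∧ _))

lemma Ssub_mk (a b : ℚ) (m : ℤ) (v : ExtSeg) : Ssub ⟨a, b, m⟩ v ↔ SsubAB a b v := Iff.rfl

lemma mu_mk (a b : ℚ) (m : ℤ) : (⟨a, b, m⟩ : ExtSeg).mu = m := rfl

lemma extseg_ext {x y : ExtSeg} (h1 : x.A = y.A) (h2 : x.B = y.B) (h3 : x.mu = y.mu) :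
    x = y := by
  cases x; cases y; simp_all

/-- Number of strictly-`v`-contained entries of `C` in positions `(k, n)`. -/
def rho (n : ℕ) (C : ℕ → ExtSeg) (v : ExtSeg) (k : ℕ) : ℕ :=
  ((Finset.Ioo k n).filter (fun l => Ssub (C l) v)).card

/-- The basic invariant attached to position `p` and reference segment `v`. -/
def phi (n : ℕ) (C : ℕ → ExtSeg) (v : ExtSeg) (p : ℕ) : ℤ :=
  (-1) ^ (rho n C v p) * (C p).mu
    + 2 * ∑ k ∈ Finset.Ioo p n,
        (if Ssub (C k) v then (-1) ^ (rho n C v k) * (C k).mu else 0)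

/-- The list of `phi`-values over positions carrying segment `v`. -/
def lam (n : ℕ) (C : ℕ → ExtSeg) (v : ExtSeg) : List ℤ :=
  ((List.range n).filter (fun p => decide (SegEq (C p) v))).map (phi n C v)

lemma sum_pair {M : Type*} [AddCommMonoid M] {s : Finset ℕ} {i j : ℕ} (hij : i ≠ j)
    (hi : i ∈ s) (hj : j ∈ s) {f g : ℕ → M}
    (h2 : f i + f j = g i + g j)
    (hoff : ∀ x ∈ s, x ≠ i → x ≠ j → f x = g x) :
    ∑ x ∈ s, f x = ∑ x ∈ s, g x := by
  classical
  have hj' : j ∈ s.erase i := Finset.mem_erase.2 ⟨Ne.symm hij, hj⟩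
  rw [← Finset.add_sum_erase s f hi, ← Finset.add_sum_erase _ f hj',
      ← Finset.add_sum_erase s g hi, ← Finset.add_sum_erase _ g hj']
  have hrest : ∑ x ∈ (s.erase i).erase j, f x = ∑ x ∈ (s.erase i).erase j, g x := by
    refine Finset.sum_congr rfl (fun x hx => ?_)
    have t1 := Finset.mem_erase.1 hx
    have t2 := Finset.mem_erase.1 t1.2
    exact hoff x t2.2 t2.1 t1.1
  rw [← add_assoc, ← add_assoc, hrest, h2]

lemma Ioo_succ_insert {n k : ℕ} (h : k + 1 < n) :
    Finset.Ioo k n = insert (k + 1) (Finset.Ioo (k + 1) n) := by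
  rw [Finset.Ioo_insert_left h, Finset.Ico_add_one_left_eq_Ioo]

lemma rho_succ (n : ℕ) (C : ℕ → ExtSeg) (v : ExtSeg) {k : ℕ} (h : k + 1 < n) :
    rho n C v k = (if Ssub (C (k + 1)) v then 1 else 0) + rho n C v (k + 1) := by
  unfold rho
  rw [Ioo_succ_insert h, Finset.filter_insert]
  split
  · rw [Finset.card_insert_of_notMem (by simp)]
    omega
  · simp

lemma phi_succ (n : ℕ) (C : ℕ → ExtSeg) (v : ExtSeg) {k : ℕ} (h : k + 1 < n) :
    phi n C v k = (-1) ^ (rho n C v k) * (C k).mu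
      + 2 * ((if Ssub (C (k + 1)) v then (-1) ^ (rho n C v (k + 1)) * (C (k + 1)).mu else 0)
        + ∑ l ∈ Finset.Ioo (k + 1) n,
            (if Ssub (C l) v then (-1) ^ (rho n C v l) * (C l).mu else 0)) := by
  unfold phi
  rw [Ioo_succ_insert h, Finset.sum_insert (by simp)]


section Core

variable {n i : ℕ} {C C' : ℕ → ExtSeg} {sA sB bA bB : ℚ} {ms mb : ℤ} {v : ExtSeg}

/-- Core invariance: `C` has the big segment at `i` and the small one at `i+1`,
`C'` has them swapped with the big `μ` reflected. -/
lemma core (hi : i + 1 < n)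
    (h1 : bB ≤ sB) (h2 : sA ≤ bA) (h3 : ¬(sA = bA ∧ sB = bB))
    (hCi : C i = ⟨bA, bB, mb⟩) (hCi1 : C (i + 1) = ⟨sA, sB, ms⟩)
    (hC'i : C' i = ⟨sA, sB, ms⟩) (hC'i1 : C' (i + 1) = ⟨bA, bB, 2 * ms - mb⟩)
    (hout : ∀ k, k ≠ i → k ≠ i + 1 → C' k = C k) (v : ExtSeg) :
    lam n C' v = lam n C v := by
  have hbs : SsubAB bA bB v → SsubAB sA sB v := by
    rintro ⟨u1, u2, u3⟩
    refine ⟨le_trans u1 h1, le_trans h2 u2, fun he => h3 ⟨by linarith [he.1], by linarith [he.2]⟩⟩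
  -- rho facts
  have F1 : ∀ k, i + 1 ≤ k → rho n C' v k = rho n C v k := by
    intro k hk
    unfold rho
    congr 1
    refine Finset.filter_congr (fun l hl => ?_)
    have hl' := Finset.mem_Ioo.1 hl
    rw [hout l (by omega) (by omega)]
  have hr0' : rho n C' v (i + 1) = rho n C v (i + 1) := F1 (i + 1) le_rfl
  have hRi : rho n C v i = (if SsubAB sA sB v then 1 else 0) + rho n C v (i + 1) := by
    rw [rho_succ n C v hi, hCi1]; rfl
  have hRi' : rho n C' v i = (if SsubAB bA bB v then 1 else 0) + rho n C v (i + 1) := by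
    rw [rho_succ n C' v hi, hC'i1, hr0']; rfl
  have F2 : ∀ k, k < i → rho n C' v k = rho n C v k := by
    intro k hk
    unfold rho
    rw [Finset.card_filter, Finset.card_filter]
    refine sum_pair (i := i) (j := i + 1) (by omega)
      (Finset.mem_Ioo.2 ⟨hk, by omega⟩) (Finset.mem_Ioo.2 ⟨by omega, hi⟩) ?_
      (fun x hx hxi hxi1 => by rw [hout x hxi hxi1])
    rw [hCi, hCi1, hC'i, hC'i1]
    show (if SsubAB sA sB v then 1 else 0) + (if SsubAB bA bB v then 1 else 0)
      = (if SsubAB bA bB v then 1 else 0) + (if SsubAB sA sB v then 1 else 0)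
    omega
  have Fall : ∀ k, k ≠ i → k ≠ i + 1 → rho n C' v k = rho n C v k := by
    intro k hk1 hk2
    rcases (by omega : k < i ∨ i + 1 ≤ k) with h | h
    · exact F2 k h
    · exact F1 k h
  -- the common tail sum
  have hT : (∑ l ∈ Finset.Ioo (i + 1) n,
        (if Ssub (C' l) v then (-1 : ℤ) ^ (rho n C' v l) * (C' l).mu else 0))
      = ∑ l ∈ Finset.Ioo (i + 1) n,
        (if Ssub (C l) v then (-1 : ℤ) ^ (rho n C v l) * (C l).mu else 0) := by
    refine Finset.sum_congr rfl (fun l hl => ?_)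
    have hl' := Finset.mem_Ioo.1 hl
    rw [hout l (by omega) (by omega), F1 l (by omega)]
  -- phi at positions < i
  have PLT : ∀ p, p < i → phi n C' v p = phi n C v p := by
    intro p hp
    unfold phi
    rw [hout p (by omega) (by omega), F2 p hp]
    congr 1
    congr 1
    refine sum_pair (i := i) (j := i + 1) (by omega)
      (Finset.mem_Ioo.2 ⟨hp, by omega⟩) (Finset.mem_Ioo.2 ⟨by omega, hi⟩) ?_
      (fun x hx hxi hxi1 => by rw [hout x hxi hxi1, Fall x hxi hxi1])
    rw [hCi, hCi1, hC'i, hC'i1, hRi, hRi', hr0']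
    show (if SsubAB sA sB v then (-1 : ℤ) ^ ((if SsubAB bA bB v then 1 else 0) + rho n C v (i+1)) * ms else 0)
        + (if SsubAB bA bB v then (-1 : ℤ) ^ (rho n C v (i+1)) * (2 * ms - mb) else 0)
      = (if SsubAB bA bB v then (-1 : ℤ) ^ ((if SsubAB sA sB v then 1 else 0) + rho n C v (i+1)) * mb else 0)
        + (if SsubAB sA sB v then (-1 : ℤ) ^ (rho n C v (i+1)) * ms else 0)
    by_cases hb : SsubAB bA bB v
    · have hs : SsubAB sA sB v := hbs hb
      simp only [hb, hs, if_true, pow_add, pow_one]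
      ring
    · by_cases hs : SsubAB sA sB v
      · simp only [hb, hs, if_true, if_false, pow_add, pow_one]
        ring
      · simp [hb, hs]
  -- phi at positions > i+1
  have PGT : ∀ p, i + 1 < p → phi n C' v p = phi n C v p := by
    intro p hp
    unfold phi
    rw [hout p (by omega) (by omega), F1 p (by omega)]
    congr 1
    congr 1
    refine Finset.sum_congr rfl (fun l hl => ?_)
    have hl' := Finset.mem_Ioo.1 hl
    rw [hout l (by omega) (by omega), F1 l (by omega)]
  -- the moved pair
  have PM1 : SegEq (C i) v → phi n C' v (i + 1) = phi n C v i := by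
    intro hv
    rw [hCi] at hv
    obtain ⟨hvA, hvB⟩ : bA = v.A ∧ bB = v.B := hv
    have hs : SsubAB sA sB v :=
      ⟨hvB ▸ h1, hvA ▸ h2, fun he => h3 ⟨by rw [he.1, ← hvA], by rw [he.2, ← hvB]⟩⟩
    rw [phi_succ n C v hi]
    unfold phi
    rw [hCi, hCi1, hC'i1, hRi, hr0', hT]
    simp only [Ssub_mk, mu_mk, hs, if_true, pow_add, pow_one]
    ring
  have PM2 : SegEq (C (i + 1)) v → phi n C' v i = phi n C v (i + 1) := by
    intro hv
    rw [hCi1] at hv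
    obtain ⟨hvA, hvB⟩ : sA = v.A ∧ sB = v.B := hv
    have hnb : ¬ SsubAB bA bB v := by
      rintro ⟨u1, u2, u3⟩
      exact h3 ⟨by linarith [hvA], by linarith [hvB]⟩
    rw [phi_succ n C' v hi]
    rw [hC'i, hC'i1, hr0', hRi', hT]
    show (-1:ℤ) ^ ((if SsubAB bA bB v then 1 else 0) + rho n C v (i+1)) * ms
        + 2 * ((if SsubAB bA bB v then (-1:ℤ) ^ (rho n C v (i+1)) * (2 * ms - mb) else 0) + _)
      = phi n C v (i + 1)
    unfold phi
    rw [hCi1]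
    simp only [hnb, if_false, Nat.zero_add, zero_add, mu_mk]
  -- assembling the lists
  have hNB : ¬(SegEq (C i) v ∧ SegEq (C (i + 1)) v) := by
    rintro ⟨u, w⟩
    rw [hCi] at u; rw [hCi1] at w
    exact h3 ⟨w.1.trans u.1.symm, w.2.trans u.2.symm⟩
  obtain ⟨m, rfl⟩ : ∃ m, n = i + 1 + 1 + m := ⟨n - (i + 2), by omega⟩
  unfold lam
  rw [List.range_add, List.range_succ, List.range_succ,
      List.filter_append, List.filter_append, List.filter_append,
      List.filter_append, List.filter_append, List.filter_append,
      List.map_append, List.map_append, List.map_append,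
      List.map_append, List.map_append, List.map_append]
  have E1 : ((List.range i).filter (fun p => decide (SegEq (C' p) v))).map (phi (i+1+1+m) C' v)
      = ((List.range i).filter (fun p => decide (SegEq (C p) v))).map (phi (i+1+1+m) C v) := by
    have hf : (List.range i).filter (fun p => decide (SegEq (C' p) v))
        = (List.range i).filter (fun p => decide (SegEq (C p) v)) := by
      refine List.filter_congr (fun x hx => ?_)
      have hx' := List.mem_range.1 hx
      rw [hout x (by omega) (by omega)]
    rw [hf]
    exact List.map_congr_left (fun x hx =>
      PLT x (List.mem_range.1 (List.mem_filter.1 hx).1))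
  have E3 : (((List.range m).map (fun x => i + 1 + 1 + x)).filter
        (fun p => decide (SegEq (C' p) v))).map (phi (i+1+1+m) C' v)
      = (((List.range m).map (fun x => i + 1 + 1 + x)).filter
        (fun p => decide (SegEq (C p) v))).map (phi (i+1+1+m) C v) := by
    have hf : ((List.range m).map (fun x => i + 1 + 1 + x)).filter
          (fun p => decide (SegEq (C' p) v))
        = ((List.range m).map (fun x => i + 1 + 1 + x)).filter
          (fun p => decide (SegEq (C p) v)) := by
      refine List.filter_congr (fun x hx => ?_)
      obtain ⟨y, hy, rfl⟩ := List.mem_map.1 hx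
      rw [hout _ (by omega) (by omega)]
    rw [hf]
    refine List.map_congr_left (fun x hx => ?_)
    obtain ⟨y, hy, rfl⟩ := List.mem_map.1 (List.mem_filter.1 hx).1
    exact PGT _ (by omega)
  have E2 : (([i].filter (fun p => decide (SegEq (C' p) v))).map (phi (i+1+1+m) C' v)
        ++ ([i+1].filter (fun p => decide (SegEq (C' p) v))).map (phi (i+1+1+m) C' v))
      = (([i].filter (fun p => decide (SegEq (C p) v))).map (phi (i+1+1+m) C v)
        ++ ([i+1].filter (fun p => decide (SegEq (C p) v))).map (phi (i+1+1+m) C v)) := by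
    by_cases h1v : SegEq (C i) v <;> by_cases h2v : SegEq (C (i + 1)) v
    · exact absurd ⟨h1v, h2v⟩ hNB
    · have b1 : decide (SegEq (C' i) v) = false := by
        rw [hC'i]
        simp only [decide_eq_false_iff_not]
        intro hc
        exact h2v (by rw [hCi1]; exact hc)
      have b2 : decide (SegEq (C' (i+1)) v) = true := by
        rw [hC'i1]
        simp only [decide_eq_true_eq]
        rw [hCi] at h1v
        exact h1v
      have b3 : decide (SegEq (C i) v) = true := by simp only [decide_eq_true_eq]; exact h1v
      have b4 : decide (SegEq (C (i+1)) v) = false := by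
        simp only [decide_eq_false_iff_not]; exact h2v
      simp only [List.filter_cons, List.filter_nil, b1, b2, b3, b4, if_true, if_false,
        Bool.false_eq_true, List.map_cons, List.map_nil, List.nil_append, List.append_nil,
        if_true, reduceIte]
      simp only [PM1 h1v]
    · have b1 : decide (SegEq (C' i) v) = true := by
        rw [hC'i]
        simp only [decide_eq_true_eq]
        rw [hCi1] at h2v
        exact h2v
      have b2 : decide (SegEq (C' (i+1)) v) = false := by
        rw [hC'i1]
        simp only [decide_eq_false_iff_not]
        intro hc
        exact h1v (by rw [hCi]; exact hc)
      have b3 : decide (SegEq (C i) v) = false := by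
        simp only [decide_eq_false_iff_not]; exact h1v
      have b4 : decide (SegEq (C (i+1)) v) = true := by simp only [decide_eq_true_eq]; exact h2v
      simp only [List.filter_cons, List.filter_nil, b1, b2, b3, b4,
        Bool.false_eq_true, List.map_cons, List.map_nil, List.nil_append, List.append_nil,
        reduceIte]
      simp only [PM2 h2v]
    · have b1 : decide (SegEq (C' i) v) = false := by
        rw [hC'i]
        simp only [decide_eq_false_iff_not]
        intro hc
        exact h2v (by rw [hCi1]; exact hc)
      have b2 : decide (SegEq (C' (i+1)) v) = false := by
        rw [hC'i1]
        simp only [decide_eq_false_iff_not]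
        intro hc
        exact h1v (by rw [hCi]; exact hc)
      have b3 : decide (SegEq (C i) v) = false := by
        simp only [decide_eq_false_iff_not]; exact h1v
      have b4 : decide (SegEq (C (i+1)) v) = false := by
        simp only [decide_eq_false_iff_not]; exact h2v
      simp only [List.filter_cons, List.filter_nil, b1, b2, b3, b4,
        Bool.false_eq_true, List.map_nil, List.append_nil, reduceIte]
  rw [E1, E3]
  simp only [List.append_assoc]
  congr 1
  rw [← List.append_assoc, ← List.append_assoc, E2]

end Core

section Steps

lemma nec_mu_eq {n : ℕ} {C : ℕ → ExtSeg} (hnec : Nec n C) {i : ℕ} (hi : i + 1 < n)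
    (hA : (C i).A = (C (i + 1)).A) (hB : (C i).B = (C (i + 1)).B) :
    (C i).mu = (C (i + 1)).mu := by
  have h := hnec i hi
  rw [hA, hB] at h
  simp only [sub_self, abs_zero, add_zero] at h
  have h3 : |((C (i + 1)).mu : ℚ) - ((C i).mu : ℚ)| = 0 :=
    le_antisymm h (abs_nonneg _)
  have h2 : ((C (i + 1)).mu : ℚ) - ((C i).mu : ℚ) = 0 := abs_eq_zero.1 h3
  have h4 : ((C i).mu : ℚ) = ((C (i + 1)).mu : ℚ) := by linarith
  exact_mod_cast h4

lemma step_lam {n : ℕ} {C C' : ℕ → ExtSeg} (hst : ReorderStep n C C') (hnec : Nec n C)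
    (v : ExtSeg) : lam n C' v = lam n C v := by
  obtain ⟨i, hi, hcase⟩ := hst
  rcases hcase with ⟨hA, hB, rfl⟩ | ⟨hA, hB, rfl⟩ | ⟨hA, hB, rfl⟩
  · -- branch 1 : C i ⊆ C (i+1)
    by_cases heq : (C i).A = (C (i + 1)).A ∧ (C i).B = (C (i + 1)).B
    · have hmu := nec_mu_eq hnec hi heq.1 heq.2
      have hCC : swapAt C i ⟨(C (i+1)).A, (C (i+1)).B, 2 * (C i).mu - (C (i+1)).mu⟩
          ⟨(C i).A, (C i).B, (C i).mu⟩ = C := by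
        funext k
        by_cases hk : k = i
        · subst hk
          have hred : swapAt C k ⟨(C (k+1)).A, (C (k+1)).B, 2 * (C k).mu - (C (k+1)).mu⟩
              ⟨(C k).A, (C k).B, (C k).mu⟩ k
              = ⟨(C (k+1)).A, (C (k+1)).B, 2 * (C k).mu - (C (k+1)).mu⟩ := by
            simp [swapAt]
          rw [hred]
          exact extseg_ext heq.1.symm heq.2.symm (by rw [← hmu]; ring)
        · by_cases hk2 : k = i + 1
          · subst hk2
            have : swapAt C i ⟨(C (i+1)).A, (C (i+1)).B, 2 * (C i).mu - (C (i+1)).mu⟩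
                ⟨(C i).A, (C i).B, (C i).mu⟩ (i+1) = ⟨(C i).A, (C i).B, (C i).mu⟩ := by
              simp [swapAt]
            rw [this]
            exact extseg_ext heq.1 heq.2 hmu
          · simp [swapAt, hk, hk2]
      rw [hCC]
    · refine (core (n := n) (i := i) hi (C' := C)
        (sA := (C i).A) (sB := (C i).B) (bA := (C (i+1)).A) (bB := (C (i+1)).B)
        (ms := (C i).mu) (mb := 2 * (C i).mu - (C (i+1)).mu)
        hB hA heq ?_ ?_ rfl ?_ ?_ v).symm
      · simp [swapAt]
      · simp [swapAt]
      · exact extseg_ext rfl rfl (by ring)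
      · intro k hk1 hk2
        simp [swapAt, hk1, hk2]
  · -- branch 2 : C (i+1) ⊆ C i
    by_cases heq : (C i).A = (C (i + 1)).A ∧ (C i).B = (C (i + 1)).B
    · have hmu := nec_mu_eq hnec hi heq.1 heq.2
      have hCC : swapAt C i ⟨(C (i+1)).A, (C (i+1)).B, (C (i+1)).mu⟩
          ⟨(C i).A, (C i).B, 2 * (C (i+1)).mu - (C i).mu⟩ = C := by
        funext k
        by_cases hk : k = i
        · subst hk
          have hred : swapAt C k ⟨(C (k+1)).A, (C (k+1)).B, (C (k+1)).mu⟩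
              ⟨(C k).A, (C k).B, 2 * (C (k+1)).mu - (C k).mu⟩ k
              = ⟨(C (k+1)).A, (C (k+1)).B, (C (k+1)).mu⟩ := by
            simp [swapAt]
          rw [hred]
          exact extseg_ext heq.1.symm heq.2.symm hmu.symm
        · by_cases hk2 : k = i + 1
          · subst hk2
            have : swapAt C i ⟨(C (i+1)).A, (C (i+1)).B, (C (i+1)).mu⟩
                ⟨(C i).A, (C i).B, 2 * (C (i+1)).mu - (C i).mu⟩ (i+1)
                = ⟨(C i).A, (C i).B, 2 * (C (i+1)).mu - (C i).mu⟩ := by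
              simp [swapAt]
            rw [this]
            exact extseg_ext heq.1 heq.2 (by rw [hmu]; ring)
          · simp [swapAt, hk, hk2]
      rw [hCC]
    · refine core (n := n) (i := i) hi (C := C)
        (sA := (C (i+1)).A) (sB := (C (i+1)).B) (bA := (C i).A) (bB := (C i).B)
        (ms := (C (i+1)).mu) (mb := (C i).mu)
        hB hA (fun he => heq ⟨he.1.symm, he.2.symm⟩) rfl rfl ?_ ?_ ?_ v
      · simp [swapAt]
      · simp [swapAt]
      · intro k hk1 hk2
        simp [swapAt, hk1, hk2]
  · rfl

lemma chain_lam {n : ℕ} {S : ℕ → ExtSeg} (h : InRep n S) {T : ℕ → ExtSeg}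
    (hre : Reorder n S T) : ∀ v, lam n T v = lam n S v := by
  induction hre with
  | refl => intro v; rfl
  | @tail b c hab hbc ih =>
      intro v
      have hnec : Nec n b := h.2.2.1 b hab
      rw [step_lam hbc hnec v, ih v]

end Steps

end Stmt4



/-- If `𝒮 ∈ Rep` and `𝒮'` is a reordering of `𝒮` whose underlying segments appear in the
same order (same `A_i` and `B_i` at each position), then the `μ`-parameters also agree:
the `μ`-parameters are well-defined for a given reordering of the extended multi-segment. -/
theorem stmt_4 (n : ℕ) (S S' : ℕ → ExtSeg) (h : InRep n S) (hre : Reorder n S S')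
    (hseg : ∀ i, i < n → (S i).A = (S' i).A ∧ (S i).B = (S' i).B) :
    ∀ i, i < n → (S i).mu = (S' i).mu := by
  have hlam : ∀ v, Stmt4.lam n S' v = Stmt4.lam n S v := Stmt4.chain_lam h hre
  have hphi : ∀ p, p < n → Stmt4.phi n S' (S p) p = Stmt4.phi n S (S p) p := by
    intro p hp
    have hfl : (List.range n).filter (fun q => decide (Stmt4.SegEq (S' q) (S p)))
        = (List.range n).filter (fun q => decide (Stmt4.SegEq (S q) (S p))) := by
      refine List.filter_congr (fun x hx => ?_)
      have hx' := List.mem_range.1 hx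
      refine decide_eq_decide.2 ?_
      unfold Stmt4.SegEq
      rw [(hseg x hx').1, (hseg x hx').2]
    have hl := hlam (S p)
    unfold Stmt4.lam at hl
    rw [hfl] at hl
    refine List.map_eq_map_iff.1 hl p (List.mem_filter.2 ⟨List.mem_range.2 hp, ?_⟩)
    simp [Stmt4.SegEq]
  have hrho : ∀ p, p < n → ∀ j, Stmt4.rho n S' (S p) j = Stmt4.rho n S (S p) j := by
    intro p hp j
    unfold Stmt4.rho
    congr 1
    refine Finset.filter_congr (fun l hl => ?_)
    have hl' := (Finset.mem_Ioo.1 hl).2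
    unfold Stmt4.Ssub Stmt4.SsubAB
    rw [(hseg l hl').1, (hseg l hl').2]
  have hlen : ∀ p, p < n → ∃ k : ℕ, (S p).A - (S p).B = (k : ℚ) := h.1.1.2.1
  suffices H : ∀ M : ℕ, ∀ p, p < n → ∀ k : ℕ, (S p).A - (S p).B = (k : ℚ) → k < M →
      (S p).mu = (S' p).mu by
    intro p hp
    obtain ⟨k, hk⟩ := hlen p hp
    exact H (k + 1) p hp k hk (by omega)
  intro M
  induction M with
  | zero => intro p hp k hk hkM; omega
  | succ M ih =>
    intro p hp k hk hkM
    have hph := hphi p hp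
    unfold Stmt4.phi at hph
    rw [hrho p hp p] at hph
    have hsum : (∑ l ∈ Finset.Ioo p n,
          if Stmt4.Ssub (S' l) (S p) then (-1:ℤ) ^ Stmt4.rho n S' (S p) l * (S' l).mu else 0)
        = ∑ l ∈ Finset.Ioo p n,
          if Stmt4.Ssub (S l) (S p) then (-1:ℤ) ^ Stmt4.rho n S (S p) l * (S l).mu else 0 := by
      refine Finset.sum_congr rfl (fun l hl => ?_)
      have hl' := (Finset.mem_Ioo.1 hl).2
      have hiff : Stmt4.Ssub (S' l) (S p) ↔ Stmt4.Ssub (S l) (S p) := by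
        unfold Stmt4.Ssub Stmt4.SsubAB
        rw [(hseg l hl').1, (hseg l hl').2]
      by_cases hss : Stmt4.Ssub (S l) (S p)
      · rw [if_pos (hiff.2 hss), if_pos hss, hrho p hp l]
        obtain ⟨kl, hkl⟩ := hlen l hl'
        have hklq : (kl : ℚ) < (k : ℚ) := by
          rw [← hkl, ← hk]
          obtain ⟨u1, u2, u3⟩ := hss
          rcases eq_or_lt_of_le
              (by linarith : (S l).A - (S l).B ≤ (S p).A - (S p).B) with he | hlt
          · exact absurd ⟨by linarith, by linarith⟩ u3
          · exact hlt
        have hkl' : kl < k := by exact_mod_cast hklq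
        rw [← ih l hl' kl hkl (by omega)]
      · rw [if_neg (fun hc => hss (hiff.1 hc)), if_neg hss]
    rw [hsum] at hph
    have h2 : (-1:ℤ) ^ (Stmt4.rho n S (S p) p) * (S' p).mu
        = (-1:ℤ) ^ (Stmt4.rho n S (S p) p) * (S p).mu := add_right_cancel hph
    exact (mul_left_cancel₀ (pow_ne_zero _ (by norm_num : (-1:ℤ) ≠ 0)) h2).symm
end

section
/- Let 𝒮 = (([A_i,B_i],μ_i))_{i=1}^{n} be a standard homogeneous extended multi-segment, let ([C,D],ν) be a compatible extended segment, and let 𝒮′ := 𝒮_{([C,D],ν)} with the two copies of ([C,D],ν) inserted at consecutive positions i′ and i′+1. Let 1 ≤ i < j ≤ n with i < i′ ≤ j and suppose S_i ∼ S_j are connected in 𝒮. If S_i and S_j are still connected in 𝒮′, then Δ_𝒮(μ_i,μ_j) = Δ_{𝒮′}(μ_i,μ_j), where on the right the Δ is computed between the entries of 𝒮′ corresponding to S_i and S_j. -/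
/-- Insertion and `Δ`, connected case: if `S_i ∼ S_j` are connected in the standard `𝒮`,
the inserted block of `([C,D],ν)` lands strictly after position `i` and at position at most
`j`, and `S_i`, `S_j` remain connected in `𝒮' = 𝒮_{([C,D],ν)}` (where they sit at positions
`i` and `j + 2`), then `Δ_𝒮(μ_i,μ_j) = Δ_{𝒮'}(μ_i,μ_j)`. -/
theorem stmt_5 (n : ℕ) (S : ℕ → ExtSeg) (T : ExtSeg)
    (hS : IsEMS n S) (hstd : IsStandard n S) (hT : Compatible n S T)
    (i j : ℕ) (hconn : Connected n S i j)
    (hip : i < insertPos n S T) (hpj : insertPos n S T ≤ j)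
    (hconn' : Connected (n + 2) (insertTwice n S T) i (j + 2)) :
    Delta S i j = Delta (insertTwice n S T) i (j + 2) := by
  
  classical
  obtain ⟨r, hr⟩ : ∃ r, insertPos n S T = r + 1 := ⟨insertPos n S T - 1, by omega⟩
  set S' := insertTwice n S T with hS'def
  rw [hr] at hip hpj
  -- evaluation lemmas for S'
  have eval : ∀ k, S' k = if k < insertPos n S T then S k
      else if k = insertPos n S T ∨ k = insertPos n S T + 1 then T else S (k-2) :=
    fun k => rfl
  have e1 : ∀ k, k < r + 1 → S' k = S k := by
    intro k hk
    rw [eval, hr, if_pos hk]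
  have e2 : S' (r+1) = T := by
    rw [eval, hr, if_neg (by omega), if_pos (by omega)]
  have e3 : S' (r+2) = T := by
    rw [eval, hr, if_neg (by omega), if_pos (by omega)]
  have e4 : ∀ k, r + 1 ≤ k → S' (k+2) = S k := by
    intro k hk
    rw [eval, hr, if_neg (by omega), if_neg (by omega)]
    congr 1
  have eAi : (S' i).A = (S i).A := by rw [e1 i hip]
  -- shift lemma for the sign counts
  have hshift : ∀ m, r ≤ m →
      ((Finset.Ioo (m+2) (j+2)).filter (fun k => (S' k).A ≤ (S i).A)).card
        = ((Finset.Ioo m j).filter (fun k => (S k).A ≤ (S i).A)).card := by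
    intro m hm
    rw [← Finset.map_add_right_Ioo, Finset.filter_map, Finset.card_map]
    congr 1
    apply Finset.filter_congr
    intro k hk
    simp only [Finset.mem_Ioo] at hk
    simp only [Function.comp_apply, addRightEmbedding_apply]
    rw [e4 k (by omega)]
  -- middle lemma
  have hmid : ∀ m, m < r + 1 →
      ((Finset.Ioo m (j+2)).filter (fun k => (S' k).A ≤ (S i).A)).card
        = ((Finset.Ioo m j).filter (fun k => (S k).A ≤ (S i).A)).card
          + (if T.A ≤ (S i).A then 2 else 0) := by
    intro m hm
    have hsplit : Finset.Ioo m (j+2)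
        = Finset.Ico (m+1) (r+1) ∪ (Finset.Ico (r+1) (r+3) ∪ Finset.Ico (r+3) (j+2)) := by
      ext x
      simp only [Finset.mem_Ioo, Finset.mem_union, Finset.mem_Ico]
      omega
    have hd1 : Disjoint (Finset.Ico (m+1) (r+1))
        (Finset.Ico (r+1) (r+3) ∪ Finset.Ico (r+3) (j+2)) := by
      rw [Finset.disjoint_union_right]
      constructor <;>
        · rw [Finset.disjoint_left]
          intro a ha hb
          simp only [Finset.mem_Ico] at ha hb
          omega
    have hd2 : Disjoint (Finset.Ico (r+1) (r+3)) (Finset.Ico (r+3) (j+2)) := by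
      rw [Finset.disjoint_left]
      intro a ha hb
      simp only [Finset.mem_Ico] at ha hb
      omega
    have hd1' : Disjoint
        ((Finset.Ico (m+1) (r+1)).filter (fun k => (S' k).A ≤ (S i).A))
        (((Finset.Ico (r+1) (r+3)).filter (fun k => (S' k).A ≤ (S i).A)) ∪
          ((Finset.Ico (r+3) (j+2)).filter (fun k => (S' k).A ≤ (S i).A))) :=
      hd1.mono (Finset.filter_subset _ _)
        (Finset.union_subset_union (Finset.filter_subset _ _) (Finset.filter_subset _ _))
    rw [hsplit, Finset.filter_union, Finset.filter_union,
      Finset.card_union_of_disjoint hd1',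
      Finset.card_union_of_disjoint (Finset.disjoint_filter_filter hd2)]
    have cA : ((Finset.Ico (m+1) (r+1)).filter (fun k => (S' k).A ≤ (S i).A)).card
        = ((Finset.Ico (m+1) (r+1)).filter (fun k => (S k).A ≤ (S i).A)).card := by
      congr 1
      apply Finset.filter_congr
      intro k hk
      simp only [Finset.mem_Ico] at hk
      rw [e1 k (by omega)]
    have cB : ((Finset.Ico (r+1) (r+3)).filter (fun k => (S' k).A ≤ (S i).A)).card
        = (if T.A ≤ (S i).A then 2 else 0) := by
      have hpair : Finset.Ico (r+1) (r+3) = {r+1, r+2} := by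
        ext x
        simp only [Finset.mem_Ico, Finset.mem_insert, Finset.mem_singleton]
        omega
      rw [hpair]
      by_cases hTA : T.A ≤ (S i).A
      · rw [if_pos hTA, Finset.filter_true_of_mem, Finset.card_insert_of_notMem (by simp),
          Finset.card_singleton]
        intro x hx
        simp only [Finset.mem_insert, Finset.mem_singleton] at hx
        rcases hx with rfl | rfl
        · rw [e2]; exact hTA
        · rw [e3]; exact hTA
      · rw [if_neg hTA, Finset.filter_false_of_mem, Finset.card_empty]
        intro x hx
        simp only [Finset.mem_insert, Finset.mem_singleton] at hx
        rcases hx with rfl | rfl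
        · rw [e2]; exact hTA
        · rw [e3]; exact hTA
    have cC : ((Finset.Ico (r+3) (j+2)).filter (fun k => (S' k).A ≤ (S i).A)).card
        = ((Finset.Ico (r+1) j).filter (fun k => (S k).A ≤ (S i).A)).card := by
      have hmap : Finset.Ico (r+3) (j+2) = (Finset.Ico (r+1) j).map (addRightEmbedding 2) := by
        rw [Finset.map_add_right_Ico]
      rw [hmap, Finset.filter_map, Finset.card_map]
      congr 1
      apply Finset.filter_congr
      intro k hk
      simp only [Finset.mem_Ico] at hk
      simp only [Function.comp_apply, addRightEmbedding_apply]
      rw [e4 k (by omega)]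
    have hRsplit : ((Finset.Ioo m j).filter (fun k => (S k).A ≤ (S i).A)).card
        = ((Finset.Ico (m+1) (r+1)).filter (fun k => (S k).A ≤ (S i).A)).card
          + ((Finset.Ico (r+1) j).filter (fun k => (S k).A ≤ (S i).A)).card := by
      have h2 : Finset.Ioo m j = Finset.Ico (m+1) (r+1) ∪ Finset.Ico (r+1) j := by
        ext x
        simp only [Finset.mem_Ioo, Finset.mem_union, Finset.mem_Ico]
        omega
      have hd : Disjoint (Finset.Ico (m+1) (r+1)) (Finset.Ico (r+1) j) := by
        simp only [Finset.disjoint_left, Finset.mem_Ico]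
        omega
      rw [h2, Finset.filter_union,
        Finset.card_union_of_disjoint (Finset.disjoint_filter_filter hd)]
    rw [cA, cB, cC, hRsplit]
    omega
  have hsign : ∀ a : ℕ, (-1 : ℤ) ^ (a + (if T.A ≤ (S i).A then 2 else 0)) = (-1) ^ a := by
    intro a
    split_ifs with h
    · rw [pow_add]; norm_num
    · rw [Nat.add_zero]
  -- now the main computation
  simp only [Delta, eAi]
  -- abbreviate the summands
  set g : ℕ → ℤ := fun m =>
    (-1 : ℤ) ^ ((Finset.Ioo m j).filter (fun k => (S k).A ≤ (S i).A)).card *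
      ((S (m+1)).mu - (S m).mu) with hg
  set g' : ℕ → ℤ := fun m =>
    (-1 : ℤ) ^ ((Finset.Ioo m (j+2)).filter (fun k => (S' k).A ≤ (S i).A)).card *
      ((S' (m+1)).mu - (S' m).mu) with hg'
  have hL : ∑ m ∈ Finset.Ico i j, g m
      = (∑ m ∈ Finset.Ico i r, g m) + g r + ∑ m ∈ Finset.Ico (r+1) j, g m := by
    rw [← Finset.sum_Ico_consecutive g (show i ≤ r+1 by omega) (show r+1 ≤ j by omega),
      Finset.sum_Ico_succ_top (show i ≤ r by omega)]
  have hR : ∑ m ∈ Finset.Ico i (j+2), g' m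
      = (∑ m ∈ Finset.Ico i r, g' m) + g' r + g' (r+1) + g' (r+2)
        + ∑ m ∈ Finset.Ico (r+3) (j+2), g' m := by
    rw [← Finset.sum_Ico_consecutive g' (show i ≤ r+3 by omega) (show r+3 ≤ j+2 by omega),
      show r+3 = r+2+1 from rfl,
      Finset.sum_Ico_succ_top (show i ≤ r+2 by omega),
      show r+2 = r+1+1 from rfl,
      Finset.sum_Ico_succ_top (show i ≤ r+1 by omega),
      Finset.sum_Ico_succ_top (show i ≤ r by omega)]
  rw [hL, hR]
  -- the shifted tail sums agree
  have hTail : ∑ m ∈ Finset.Ico (r+3) (j+2), g' m = ∑ m ∈ Finset.Ico (r+1) j, g m := by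
    have hmap : Finset.Ico (r+3) (j+2) = (Finset.Ico (r+1) j).map (addRightEmbedding 2) := by
      rw [Finset.map_add_right_Ico]
    rw [hmap, Finset.sum_map]
    apply Finset.sum_congr rfl
    intro m hm
    simp only [Finset.mem_Ico] at hm
    simp only [addRightEmbedding_apply, hg, hg']
    rw [hshift m (by omega), show m+2+1 = (m+1)+2 from rfl, e4 (m+1) (by omega),
      e4 m (by omega)]
  -- the head sums agree
  have hHead : ∑ m ∈ Finset.Ico i r, g' m = ∑ m ∈ Finset.Ico i r, g m := by
    apply Finset.sum_congr rfl
    intro m hm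
    simp only [Finset.mem_Ico] at hm
    simp only [hg, hg']
    rw [hmid m (by omega), hsign, e1 (m+1) (by omega), e1 m (by omega)]
  -- the middle terms
  have hgr : g' r = (-1 : ℤ) ^ ((Finset.Ioo r j).filter (fun k => (S k).A ≤ (S i).A)).card
      * (T.mu - (S r).mu) := by
    simp only [hg']
    rw [hmid r (by omega), hsign, e2, e1 r (by omega)]
  have hgr1 : g' (r+1) = 0 := by
    simp only [hg']
    rw [show r+1+1 = r+2 from rfl, e3, e2, sub_self, mul_zero]
  have hgr2 : g' (r+2)
      = (-1 : ℤ) ^ ((Finset.Ioo r j).filter (fun k => (S k).A ≤ (S i).A)).card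
        * ((S (r+1)).mu - T.mu) := by
    simp only [hg']
    rw [hshift r le_rfl, show r+2+1 = (r+1)+2 from rfl, e4 (r+1) (by omega), e3]
  have hgrL : g r = (-1 : ℤ) ^ ((Finset.Ioo r j).filter (fun k => (S k).A ≤ (S i).A)).card
      * ((S (r+1)).mu - (S r).mu) := by simp only [hg]
  rw [hTail, hHead, hgr, hgr1, hgr2, hgrL]
  ring
end

section
/- Let 𝒮 = (([A_i,B_i],μ_i))_{i=1}^{n} be a standard homogeneous extended multi-segment, let ([C,D],ν) be a compatible extended segment, and let 𝒮′ := 𝒮_{([C,D],ν)} with the two copies of ([C,D],ν) inserted at consecutive positions i′ and i′+1. Let 1 ≤ i < j ≤ n with i < i′ ≤ j and suppose S_i ∼ S_j are connected in 𝒮. If S_i and S_j are not connected in 𝒮′, then in 𝒮′ the entry S_i is connected to the inserted segment ([C,D],ν) and ([C,D],ν) is connected to S_j, and |Δ_𝒮(μ_i,μ_j)| ≤ |Δ_{𝒮′}(μ_i,ν)| + |Δ_{𝒮′}(ν,μ_j)|, where the Δ's on the right are computed in 𝒮′ between S_i and the nearer copy of ([C,D],ν), respectively between the nearer copy of ([C,D],ν)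 and S_j. -/
set_option maxHeartbeats 1600000 in
/-- Insertion and `Δ`, disconnected case: if `S_i ∼ S_j` are connected in the standard `𝒮`,
the inserted block of `([C,D],ν)` lands strictly after position `i` and at position at most
`j`, but `S_i` and `S_j` (at positions `i` and `j + 2`) are no longer connected in
`𝒮' = 𝒮_{([C,D],ν)}`, then `S_i` is connected to the (nearer copy of the) inserted segment,
the inserted segment is connected to `S_j`, and
`|Δ_𝒮(μ_i,μ_j)| ≤ |Δ_{𝒮'}(μ_i,ν)| + |Δ_{𝒮'}(ν,μ_j)|`. -/
theorem stmt_6 (n : ℕ) (S : ℕ → ExtSeg) (T : ExtSeg)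
    (hS : IsEMS n S) (hstd : IsStandard n S) (hT : Compatible n S T)
    (i j : ℕ) (hconn : Connected n S i j)
    (hip : i < insertPos n S T) (hpj : insertPos n S T ≤ j)
    (hnconn' : ¬ Connected (n + 2) (insertTwice n S T) i (j + 2)) :
    Connected (n + 2) (insertTwice n S T) i (insertPos n S T) ∧
    Connected (n + 2) (insertTwice n S T) (insertPos n S T + 1) (j + 2) ∧
    |Delta S i j| ≤
      |Delta (insertTwice n S T) i (insertPos n S T)| +
        |Delta (insertTwice n S T) (insertPos n S T + 1) (j + 2)| := by
  obtain ⟨hij, hjn, hnk⟩ := hconn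
  obtain ⟨q, hq⟩ : ∃ q, insertPos n S T = q + 1 := ⟨insertPos n S T - 1, by omega⟩
  rw [hq] at hip hpj ⊢
  -- basic facts about the inserted sequence
  have hS'lt : ∀ k, k < q + 1 → insertTwice n S T k = S k := by
    intro k hk
    simp only [insertTwice, hq]
    rw [if_pos hk]
  have hS'P : insertTwice n S T (q + 1) = T := by
    simp [insertTwice, hq]
  have hS'P1 : insertTwice n S T (q + 1 + 1) = T := by
    simp [insertTwice, hq]
  have hS'gt : ∀ k, q + 1 + 1 < k → insertTwice n S T k = S (k - 2) := by
    intro k hk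
    simp only [insertTwice, hq]
    rw [if_neg (by omega), if_neg (by omega)]
  have hSi : insertTwice n S T i = S i := hS'lt i hip
  have hSj2 : insertTwice n S T (j + 2) = S j := by
    simpa using hS'gt (j + 2) (by omega)
  -- Step A: the inserted value is a "disconnector"
  have hc : ((S j).A ≤ T.A ∧ T.A ≤ (S i).A) ∨ ((S i).A < T.A ∧ T.A < (S j).A) := by
    by_contra hcon
    apply hnconn'
    refine ⟨by omega, by omega, ?_⟩
    rintro ⟨k, h1, h2, h3⟩
    rw [hSi, hSj2] at h3
    by_cases hk1 : k < q + 1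
    · rw [hS'lt k hk1] at h3
      exact hnk ⟨k, h1, by omega, h3⟩
    · by_cases hk2 : q + 1 + 1 < k
      · rw [hS'gt k hk2] at h3
        exact hnk ⟨k - 2, by omega, by omega, h3⟩
      · have hk3 : insertTwice n S T k = T := by
          rcases (by omega : k = q + 1 ∨ k = q + 1 + 1) with h | h
          · rw [h]; exact hS'P
          · rw [h]; exact hS'P1
        rw [hk3] at h3
        exact hcon h3
  -- key: the predicates `A_k ≤ A_i` and `A_k ≤ T.A` agree strictly between i and j
  have hkey : ∀ k, i < k → k < j → ((S k).A ≤ (S i).A ↔ (S k).A ≤ T.A) := by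
    intro k h1 h2
    have h3 : ¬ (((S j).A ≤ (S k).A ∧ (S k).A ≤ (S i).A) ∨
        ((S i).A < (S k).A ∧ (S k).A < (S j).A)) := fun h => hnk ⟨k, h1, h2, h⟩
    push_neg at h3
    obtain ⟨h4, h5⟩ := h3
    rcases hc with ⟨h6, h7⟩ | ⟨h6, h7⟩
    · constructor
      · intro h8
        by_contra h9
        push_neg at h9
        have := h4 (le_trans h6 h9.le)
        linarith
      · intro h8; exact le_trans h8 h7
    · constructor
      · intro h8; linarith
      · intro h8
        by_contra h9
        push_neg at h9
        have := h5 h9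
        linarith
  -- Step B: the two connectedness statements
  have hC1 : Connected (n + 2) (insertTwice n S T) i (q + 1) := by
    refine ⟨hip, by omega, ?_⟩
    rintro ⟨k, h1, h2, h3⟩
    rw [hSi, hS'P, hS'lt k h2] at h3
    apply hnk
    refine ⟨k, h1, by omega, ?_⟩
    rcases hc with ⟨h6, h7⟩ | ⟨h6, h7⟩ <;> rcases h3 with ⟨h8, h9⟩ | ⟨h8, h9⟩
    · exact Or.inl ⟨le_trans h6 h8, h9⟩
    · exact absurd (lt_of_lt_of_le (lt_trans h8 h9) h7) (lt_irrefl _)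
    · exact Or.inl ⟨by linarith, by linarith⟩
    · exact Or.inr ⟨h8, lt_trans h9 h7⟩
  have hC2 : Connected (n + 2) (insertTwice n S T) (q + 1 + 1) (j + 2) := by
    refine ⟨by omega, by omega, ?_⟩
    rintro ⟨k, h1, h2, h3⟩
    rw [hS'P1, hSj2, hS'gt k h1] at h3
    apply hnk
    refine ⟨k - 2, by omega, by omega, ?_⟩
    rcases hc with ⟨h6, h7⟩ | ⟨h6, h7⟩ <;> rcases h3 with ⟨h8, h9⟩ | ⟨h8, h9⟩
    · exact Or.inl ⟨h8, le_trans h9 h7⟩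
    · exact Or.inl ⟨by linarith, by linarith⟩
    · exact Or.inl ⟨by linarith, by linarith⟩
    · exact Or.inr ⟨lt_trans h6 h8, h9⟩
  refine ⟨hC1, hC2, ?_⟩
  -- Step C: the Delta identity
  set E : ℕ := ((Finset.Ico (q + 1) j).filter (fun k => (S k).A ≤ T.A)).card with hE
  -- splitting the sign count for m < q + 1
  have hsplitcard : ∀ m, m < q + 1 →
      ((Finset.Ioo m j).filter (fun k => (S k).A ≤ (S i).A)).card
        = ((Finset.Ioo m (q + 1)).filter (fun k => (S k).A ≤ (S i).A)).card + E := by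
    intro m hm
    have hunion : Finset.Ioo m j = Finset.Ioo m (q + 1) ∪ Finset.Ico (q + 1) j := by
      ext x
      simp only [Finset.mem_Ioo, Finset.mem_union, Finset.mem_Ico]
      omega
    have hdisj : Disjoint (Finset.Ioo m (q + 1)) (Finset.Ico (q + 1) j) := by
      rw [Finset.disjoint_left]
      intro x hx hx'
      simp only [Finset.mem_Ioo] at hx
      simp only [Finset.mem_Ico] at hx'
      omega
    rw [hunion, Finset.filter_union,
      Finset.card_union_of_disjoint (Finset.disjoint_filter_filter hdisj)]
    congr 1
    rw [hE]
    congr 1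
    apply Finset.filter_congr
    intro k hk
    simp only [Finset.mem_Ico] at hk
    exact hkey k (by omega) hk.2
  -- the sign count of entries to the right of the inserted block, against T.A
  have hcard1 : ((Finset.Ioo (q + 1 + 1) (j + 2)).filter
      (fun k => (insertTwice n S T k).A ≤ T.A)).card = E := by
    rw [hE]
    refine Finset.card_bij' (fun k _ => k - 2) (fun k _ => k + 2) ?_ ?_ ?_ ?_
    · intro k hk
      simp only [Finset.mem_filter, Finset.mem_Ioo] at hk
      simp only [Finset.mem_filter, Finset.mem_Ico]
      have h := hS'gt k (by omega)
      rw [h] at hk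
      exact ⟨⟨by omega, by omega⟩, hk.2⟩
    · intro k hk
      simp only [Finset.mem_filter, Finset.mem_Ico] at hk
      simp only [Finset.mem_filter, Finset.mem_Ioo]
      refine ⟨⟨by omega, by omega⟩, ?_⟩
      rw [hS'gt (k + 2) (by omega)]
      exact hk.2
    · intro k hk
      simp only [Finset.mem_filter, Finset.mem_Ioo] at hk
      show k - 2 + 2 = k
      omega
    · intro k hk
      show k + 2 - 2 = k
      omega
  have hcard2 : ∀ m, q + 1 ≤ m →
      ((Finset.Ioo (m + 2) (j + 2)).filter
        (fun k => (insertTwice n S T k).A ≤ T.A)).card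
      = ((Finset.Ioo m j).filter (fun k => (S k).A ≤ T.A)).card := by
    intro m hm
    refine Finset.card_bij' (fun k _ => k - 2) (fun k _ => k + 2) ?_ ?_ ?_ ?_
    · intro k hk
      simp only [Finset.mem_filter, Finset.mem_Ioo] at hk
      simp only [Finset.mem_filter, Finset.mem_Ioo]
      have h := hS'gt k (by omega)
      rw [h] at hk
      exact ⟨⟨by omega, by omega⟩, hk.2⟩
    · intro k hk
      simp only [Finset.mem_filter, Finset.mem_Ioo] at hk
      simp only [Finset.mem_filter, Finset.mem_Ioo]
      refine ⟨⟨by omega, by omega⟩, ?_⟩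
      rw [hS'gt (k + 2) (by omega)]
      exact hk.2
    · intro k hk
      simp only [Finset.mem_filter, Finset.mem_Ioo] at hk
      show k - 2 + 2 = k
      omega
    · intro k hk
      show k + 2 - 2 = k
      omega
  -- Delta of the left part of S'
  have hDelta1 : Delta (insertTwice n S T) i (q + 1)
      = (∑ m ∈ Finset.Ico i q,
          (-1 : ℤ) ^ (((Finset.Ioo m (q + 1)).filter
              (fun k => (S k).A ≤ (S i).A)).card)
            * ((S (m + 1)).mu - (S m).mu)) + (T.mu - (S q).mu) := by
    rw [Delta, hSi, Finset.sum_Ico_succ_top (by omega : i ≤ q)]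
    congr 1
    · apply Finset.sum_congr rfl
      intro m hm
      simp only [Finset.mem_Ico] at hm
      rw [hS'lt (m + 1) (by omega), hS'lt m (by omega)]
      congr 2
      refine congrArg Finset.card (Finset.filter_congr ?_)
      intro k hk
      simp only [Finset.mem_Ioo] at hk
      rw [hS'lt k (by omega)]
    · have hempty : Finset.Ioo q (q + 1) = ∅ := by
        ext x
        simp only [Finset.mem_Ioo, Finset.notMem_empty, iff_false]
        omega
      rw [hempty, Finset.filter_empty, Finset.card_empty, pow_zero, one_mul,
        hS'P, hS'lt q (by omega)]
  -- Delta of the right part of S'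
  have hDelta2 : Delta (insertTwice n S T) (q + 1 + 1) (j + 2)
      = (-1 : ℤ) ^ E * ((S (q + 1)).mu - T.mu)
        + ∑ m ∈ Finset.Ico (q + 1) j,
            (-1 : ℤ) ^ (((Finset.Ioo m j).filter (fun k => (S k).A ≤ T.A)).card)
              * ((S (m + 1)).mu - (S m).mu) := by
    rw [Delta, hS'P1, Finset.sum_eq_sum_Ico_succ_bot (by omega : q + 1 + 1 < j + 2)]
    congr 1
    · rw [hcard1, hS'gt (q + 1 + 1 + 1) (by omega), hS'P1,
        show q + 1 + 1 + 1 - 2 = q + 1 from by omega]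
    · refine Finset.sum_bij' (fun m _ => m - 2) (fun m _ => m + 2) ?_ ?_ ?_ ?_ ?_
      · intro m hm
        simp only [Finset.mem_Ico] at hm ⊢
        omega
      · intro m hm
        simp only [Finset.mem_Ico] at hm ⊢
        omega
      · intro m hm
        simp only [Finset.mem_Ico] at hm
        show m - 2 + 2 = m
        omega
      · intro m hm
        show m + 2 - 2 = m
        omega
      · intro m hm
        simp only [Finset.mem_Ico] at hm
        obtain ⟨m', rfl⟩ : ∃ m', m = m' + 2 := ⟨m - 2, by omega⟩
        show ((-1 : ℤ) ^ (((Finset.Ioo (m' + 2) (j + 2)).filter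
              (fun k => (insertTwice n S T k).A ≤ T.A)).card)
            * ((insertTwice n S T (m' + 2 + 1)).mu - (insertTwice n S T (m' + 2)).mu))
          = (-1 : ℤ) ^ (((Finset.Ioo m' j).filter (fun k => (S k).A ≤ T.A)).card)
            * ((S (m' + 1)).mu - (S m').mu)
        rw [hcard2 m' (by omega), hS'gt (m' + 2 + 1) (by omega), hS'gt (m' + 2) (by omega),
          show m' + 2 + 1 - 2 = m' + 1 from by omega, show m' + 2 - 2 = m' from by omega]
  -- main identity
  have hmain : Delta S i j
      = (-1 : ℤ) ^ E * Delta (insertTwice n S T) i (q + 1)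
        + Delta (insertTwice n S T) (q + 1 + 1) (j + 2) := by
    rw [Delta, ← Finset.sum_Ico_consecutive _ (by omega : i ≤ q + 1) (by omega : q + 1 ≤ j),
      hDelta1, hDelta2]
    have hleft : ∑ m ∈ Finset.Ico i (q + 1),
        (-1 : ℤ) ^ (((Finset.Ioo m j).filter (fun k => (S k).A ≤ (S i).A)).card)
          * ((S (m + 1)).mu - (S m).mu)
        = (-1 : ℤ) ^ E * ((∑ m ∈ Finset.Ico i q,
            (-1 : ℤ) ^ (((Finset.Ioo m (q + 1)).filter
                (fun k => (S k).A ≤ (S i).A)).card)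
              * ((S (m + 1)).mu - (S m).mu)) + ((S (q + 1)).mu - (S q).mu)) := by
      have h1 : ∀ m ∈ Finset.Ico i (q + 1),
          (-1 : ℤ) ^ (((Finset.Ioo m j).filter (fun k => (S k).A ≤ (S i).A)).card)
            * ((S (m + 1)).mu - (S m).mu)
          = (-1 : ℤ) ^ E * ((-1 : ℤ) ^ (((Finset.Ioo m (q + 1)).filter
              (fun k => (S k).A ≤ (S i).A)).card) * ((S (m + 1)).mu - (S m).mu)) := by
        intro m hm
        simp only [Finset.mem_Ico] at hm
        rw [hsplitcard m (by omega), pow_add]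
        ring
      rw [Finset.sum_congr rfl h1, ← Finset.mul_sum,
        Finset.sum_Ico_succ_top (by omega : i ≤ q)]
      have hempty : ((Finset.Ioo q (q + 1)).filter (fun k => (S k).A ≤ (S i).A)).card = 0 := by
        rw [show Finset.Ioo q (q + 1) = ∅ from by
            ext x
            simp only [Finset.mem_Ioo, Finset.notMem_empty, iff_false]
            omega,
          Finset.filter_empty, Finset.card_empty]
      rw [hempty, pow_zero, one_mul]
    have hright : ∑ m ∈ Finset.Ico (q + 1) j,
        (-1 : ℤ) ^ (((Finset.Ioo m j).filter (fun k => (S k).A ≤ (S i).A)).card)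
          * ((S (m + 1)).mu - (S m).mu)
        = ∑ m ∈ Finset.Ico (q + 1) j,
            (-1 : ℤ) ^ (((Finset.Ioo m j).filter (fun k => (S k).A ≤ T.A)).card)
              * ((S (m + 1)).mu - (S m).mu) := by
      apply Finset.sum_congr rfl
      intro m hm
      simp only [Finset.mem_Ico] at hm
      congr 2
      refine congrArg Finset.card (Finset.filter_congr ?_)
      intro k hk
      simp only [Finset.mem_Ioo] at hk
      exact hkey k (by omega) (by omega)
    rw [hleft, hright]
    ring
  rw [hmain]
  calc |(-1 : ℤ) ^ E * Delta (insertTwice n S T) i (q + 1)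
      + Delta (insertTwice n S T) (q + 1 + 1) (j + 2)|
      ≤ |(-1 : ℤ) ^ E * Delta (insertTwice n S T) i (q + 1)|
        + |Delta (insertTwice n S T) (q + 1 + 1) (j + 2)| := abs_add_le _ _
    _ = |Delta (insertTwice n S T) i (q + 1)|
        + |Delta (insertTwice n S T) (q + 1 + 1) (j + 2)| := by
        rw [abs_mul, abs_pow, abs_neg, abs_one, one_pow, one_mul]
end

section
/- Let 𝒮 be a standard homogeneous extended multi-segment and let ([C_1,D_1],ν_1), …, ([C_k,D_k],ν_k) be compatible extended segments with (C_l,D_l) ≠ (C_m,D_m) whenever l ≠ m. Then for every permutation σ of {1,…,k}, the iterated insertions agree: 𝒮_{([C_{σ(1)},D_{σ(1)}],ν_{σ(1)}),…,([C_{σ(k)},D_{σ(k)}],ν_{σ(k)})} = 𝒮_{([C_1,D_1],ν_1),…,([C_k,D_k],ν_k)}. -/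
/-- Iterated insertion of a list of extended segments. -/
def insertMany : ℕ → (ℕ → ExtSeg) → List ExtSeg → (ℕ → ExtSeg)
  | _, S, [] => S
  | n, S, T :: Ts => insertMany (n + 2) (insertTwice n S T) Ts


section AuxInsertion

lemma insertPos_le_aux (n : ℕ) (S : ℕ → ExtSeg) (T : ExtSeg) : insertPos n S T ≤ n :=
  (Finset.card_filter_le _ _).trans (by simp)

lemma insertTwice_apply_aux (n : ℕ) (S : ℕ → ExtSeg) (T : ExtSeg) (j : ℕ) :
    insertTwice n S T j =
      if j < insertPos n S T then S j
      else if j = insertPos n S T ∨ j = insertPos n S T + 1 then T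
      else S (j - 2) := rfl

lemma insertPos_insertTwice_aux (n : ℕ) (S : ℕ → ExtSeg) (T T' : ExtSeg) :
    insertPos (n+2) (insertTwice n S T) T' =
      insertPos n S T' + (if T.B < T'.B ∨ (T.B = T'.B ∧ T'.A ≤ T.A) then 2 else 0) := by
  classical
  have hpn : insertPos n S T ≤ n := insertPos_le_aux n S T
  set p := insertPos n S T with hp
  unfold insertPos
  rw [Finset.card_filter, Finset.card_filter, Finset.range_eq_Ico, Finset.range_eq_Ico,
    ← Finset.sum_Ico_consecutive _ (Nat.zero_le p) (by omega : p ≤ n + 2),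
    ← Finset.sum_Ico_consecutive _ (by omega : p ≤ p + 2) (by omega : p + 2 ≤ n + 2),
    ← Finset.sum_Ico_consecutive _ (Nat.zero_le p) (by omega : p ≤ n)]
  have h1 : ∀ j ∈ Finset.Ico 0 p,
      (if (insertTwice n S T j).B < T'.B ∨ ((insertTwice n S T j).B = T'.B ∧ T'.A ≤ (insertTwice n S T j).A) then 1 else 0)
      = (if (S j).B < T'.B ∨ ((S j).B = T'.B ∧ T'.A ≤ (S j).A) then (1:ℕ) else 0) := by
    intro j hj
    rw [Finset.mem_Ico] at hj
    have : insertTwice n S T j = S j := by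
      unfold insertTwice; rw [if_pos]; omega
    rw [this]
  have h2 : ∑ j ∈ Finset.Ico p (p+2),
      (if (insertTwice n S T j).B < T'.B ∨ ((insertTwice n S T j).B = T'.B ∧ T'.A ≤ (insertTwice n S T j).A) then (1:ℕ) else 0)
      = if T.B < T'.B ∨ (T.B = T'.B ∧ T'.A ≤ T.A) then 2 else 0 := by
    have e : ∀ j ∈ Finset.Ico p (p+2), insertTwice n S T j = T := by
      intro j hj; rw [Finset.mem_Ico] at hj
      unfold insertTwice
      rw [if_neg (by omega), if_pos (by omega)]
    rw [Finset.sum_congr rfl (fun j hj => by rw [e j hj])]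
    split <;> simp [Nat.card_Ico]
  have h3 : ∑ j ∈ Finset.Ico (p+2) (n+2),
      (if (insertTwice n S T j).B < T'.B ∨ ((insertTwice n S T j).B = T'.B ∧ T'.A ≤ (insertTwice n S T j).A) then (1:ℕ) else 0)
      = ∑ j ∈ Finset.Ico p n, (if (S j).B < T'.B ∨ ((S j).B = T'.B ∧ T'.A ≤ (S j).A) then (1:ℕ) else 0) := by
    rw [Finset.sum_Ico_eq_sum_range, Finset.sum_Ico_eq_sum_range]
    have hn : n + 2 - (p + 2) = n - p := by omega
    rw [hn]
    refine Finset.sum_congr rfl ?_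
    intro i _
    have : insertTwice n S T (p + 2 + i) = S (p + i) := by
      unfold insertTwice
      rw [if_neg (by omega), if_neg (by omega)]
      congr 1; omega
    rw [this]
  rw [Finset.sum_congr rfl h1, h2, h3]
  omega

lemma insertPos_mono_aux (n : ℕ) (S : ℕ → ExtSeg) {T1 T2 : ExtSeg}
    (h : T1.B < T2.B ∨ (T1.B = T2.B ∧ T2.A < T1.A)) :
    insertPos n S T1 ≤ insertPos n S T2 := by
  classical
  refine Finset.card_le_card (Finset.monotone_filter_right _ ?_)
  intro x _ hx
  rcases hx with hx | ⟨hx1, hx2⟩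
  · rcases h with h | ⟨h1, _⟩
    · exact Or.inl (hx.trans h)
    · exact Or.inl (h1 ▸ hx)
  · rcases h with h | ⟨h1, h2⟩
    · exact Or.inl (hx1 ▸ h)
    · exact Or.inr ⟨hx1.trans h1, (le_of_lt h2).trans hx2⟩

lemma insertTwice_comm_lt_aux (n : ℕ) (S : ℕ → ExtSeg) (T1 T2 : ExtSeg)
    (h : T1.B < T2.B ∨ (T1.B = T2.B ∧ T2.A < T1.A)) :
    insertTwice (n+2) (insertTwice n S T1) T2 = insertTwice (n+2) (insertTwice n S T2) T1 := by
  have hP12 : T1.B < T2.B ∨ (T1.B = T2.B ∧ T2.A ≤ T1.A) := by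
    rcases h with h | ⟨h1, h2⟩
    · exact Or.inl h
    · exact Or.inr ⟨h1, le_of_lt h2⟩
  have hP21 : ¬ (T2.B < T1.B ∨ (T2.B = T1.B ∧ T1.A ≤ T2.A)) := by
    rintro (hc | ⟨hc1, hc2⟩) <;> rcases h with h | ⟨h1, h2⟩ <;> try linarith
  have e1 := insertPos_insertTwice_aux n S T1 T2
  have e2 := insertPos_insertTwice_aux n S T2 T1
  rw [if_pos hP12] at e1
  rw [if_neg hP21, Nat.add_zero] at e2
  have hle : insertPos n S T1 ≤ insertPos n S T2 := insertPos_mono_aux n S h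
  have h1n := insertPos_le_aux n S T1
  have h2n := insertPos_le_aux n S T2
  funext j
  simp only [insertTwice_apply_aux, e1, e2]
  split_ifs <;> first | rfl | (exfalso; omega) | (congr 1; omega)

lemma insertTwice_comm_aux (n : ℕ) (S : ℕ → ExtSeg) (T1 T2 : ExtSeg)
    (h : T1.A ≠ T2.A ∨ T1.B ≠ T2.B) :
    insertTwice (n+2) (insertTwice n S T1) T2 = insertTwice (n+2) (insertTwice n S T2) T1 := by
  rcases lt_trichotomy T1.B T2.B with hB | hB | hB
  · exact insertTwice_comm_lt_aux n S T1 T2 (Or.inl hB)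
  · have hA : T1.A ≠ T2.A := by
      rcases h with h | h
      · exact h
      · exact absurd hB h
    rcases lt_or_gt_of_ne hA with hA | hA
    · exact (insertTwice_comm_lt_aux n S T2 T1 (Or.inr ⟨hB.symm, hA⟩)).symm
    · exact insertTwice_comm_lt_aux n S T1 T2 (Or.inr ⟨hB, hA⟩)
  · exact (insertTwice_comm_lt_aux n S T2 T1 (Or.inl hB)).symm

lemma insertMany_perm_aux :
    ∀ {L1 L2 : List ExtSeg}, L1.Perm L2 →
      L1.Pairwise (fun x y => x.A ≠ y.A ∨ x.B ≠ y.B) →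
      ∀ (n : ℕ) (S : ℕ → ExtSeg), insertMany n S L1 = insertMany n S L2 := by
  intro L1 L2 h
  induction h with
  | nil => intro _ n S; rfl
  | cons x _ ih =>
    intro hpw n S
    simp only [insertMany]
    exact ih hpw.of_cons (n+2) (insertTwice n S x)
  | swap x y L =>
    intro hpw n S
    have hxy : y.A ≠ x.A ∨ y.B ≠ x.B := (List.pairwise_cons.mp hpw).1 x (by simp)
    simp only [insertMany]
    rw [insertTwice_comm_aux n S y x hxy]
  | trans h1 _ ih1 ih2 =>
    intro hpw n S
    have hpw2 := (List.Perm.pairwise_iff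
      (fun {x y : ExtSeg} (hxy : x.A ≠ y.A ∨ x.B ≠ y.B) => hxy.imp Ne.symm Ne.symm) h1).mp hpw
    rw [ih1 hpw n S, ih2 hpw2 n S]

end AuxInsertion

/-- Iterated insertions into a standard homogeneous extended multi-segment commute: if the
underlying segments `(C_i, D_i)` of the compatible extended segments are pairwise distinct,
then for every permutation `σ` the iterated insertions agree. -/
theorem stmt_7 (n : ℕ) (S : ℕ → ExtSeg) (hS : IsEMS n S) (hstd : IsStandard n S)
    (k : ℕ) (T : Fin k → ExtSeg) (hT : ∀ l, Compatible n S (T l))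
    (hdist : ∀ l m : Fin k, l ≠ m → (T l).A ≠ (T m).A ∨ (T l).B ≠ (T m).B)
    (σ : Equiv.Perm (Fin k)) :
    insertMany n S (List.ofFn (T ∘ σ)) = insertMany n S (List.ofFn T) := by
  refine insertMany_perm_aux (σ.ofFn_comp_perm T) ?_ n S
  rw [List.pairwise_ofFn]
  intro i j hij
  exact hdist (σ i) (σ j) (σ.injective.ne (ne_of_lt hij))
end

section
/- Let p, q ≥ 1 be integers and α, β ∈ ℤ; set N_1 := {α, α+2, …, α+2p} and N_2 := {β, β+2, …, β+2q}. Let ε ∈ {1,−1} and x, y ∈ ℤ with y ≥ 1 and α + εβ + x ≡ y (mod 2). Define N := {(ν_1,ν_2) ∈ N_1 × N_2 : |ν_1 + εν_2 + x| ≤ y}. If for every ν_1 ∈ N_1 there exists ν_2 ∈ N_2 with (ν_1,ν_2) ∈ N, then N contains two adjacent lattice points; that is, there exists (ν_1,ν_2) ∈ N such that (ν_1 + 2, ν_2) ∈ N or (ν_1, ν_2 + 2) ∈ N. -/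
/-- Adjacent lattice points: let `N₁ = {α, α+2, …, α+2p}` and `N₂ = {β, β+2, …, β+2q}`
with `p, q ≥ 1`, let `ε = ±1`, `y ≥ 1` with `α + εβ + x ≡ y (mod 2)`, and let
`N = {(ν₁,ν₂) ∈ N₁ × N₂ : |ν₁ + εν₂ + x| ≤ y}`. If every `ν₁ ∈ N₁` admits some `ν₂ ∈ N₂`
with `(ν₁,ν₂) ∈ N`, then `N` contains two adjacent lattice points. -/
theorem stmt_11 (p q : ℕ) (hp : 1 ≤ p) (hq : 1 ≤ q) (α β ε x y : ℤ)
    (hε : ε = 1 ∨ ε = -1) (hy : 1 ≤ y)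
    (hpar : (α + ε * β + x) % 2 = y % 2)
    (N1 N2 : Set ℤ)
    (hN1 : N1 = {ν | ∃ t : ℕ, t ≤ p ∧ ν = α + 2 * (t : ℤ)})
    (hN2 : N2 = {ν | ∃ t : ℕ, t ≤ q ∧ ν = β + 2 * (t : ℤ)})
    (N : Set (ℤ × ℤ))
    (hN : N = {w | w.1 ∈ N1 ∧ w.2 ∈ N2 ∧ |w.1 + ε * w.2 + x| ≤ y})
    (hsur : ∀ ν1 ∈ N1, ∃ ν2 ∈ N2, (ν1, ν2) ∈ N) :
    ∃ w ∈ N, (((w.1 + 2, w.2) ∈ N) ∨ ((w.1, w.2 + 2) ∈ N)) := by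
  subst hN1 hN2 hN
  by_contra hcon
  push_neg at hcon
  have hcon' : ∀ a b : ℤ, (a, b) ∈ {w : ℤ × ℤ | w.1 ∈ {ν : ℤ | ∃ t : ℕ, t ≤ p ∧ ν = α + 2 * (t : ℤ)} ∧
      w.2 ∈ {ν : ℤ | ∃ t : ℕ, t ≤ q ∧ ν = β + 2 * (t : ℤ)} ∧ |w.1 + ε * w.2 + x| ≤ y} →
      ((a + 2, b) ∉ {w : ℤ × ℤ | w.1 ∈ {ν : ℤ | ∃ t : ℕ, t ≤ p ∧ ν = α + 2 * (t : ℤ)} ∧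
      w.2 ∈ {ν : ℤ | ∃ t : ℕ, t ≤ q ∧ ν = β + 2 * (t : ℤ)} ∧ |w.1 + ε * w.2 + x| ≤ y}) ∧
      ((a, b + 2) ∉ {w : ℤ × ℤ | w.1 ∈ {ν : ℤ | ∃ t : ℕ, t ≤ p ∧ ν = α + 2 * (t : ℤ)} ∧
      w.2 ∈ {ν : ℤ | ∃ t : ℕ, t ≤ q ∧ ν = β + 2 * (t : ℤ)} ∧ |w.1 + ε * w.2 + x| ≤ y}) :=
    fun a b h => hcon (a, b) h
  obtain ⟨ν2, -, hm⟩ := hsur α ⟨0, Nat.zero_le _, by push_cast; ring⟩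
  obtain ⟨ν2', -, hm'⟩ := hsur (α + 2 * (p : ℤ)) ⟨p, le_rfl, rfl⟩
  obtain ⟨-, ⟨s, hs, hseq⟩, habs⟩ := hm
  obtain ⟨-, ⟨s', hs', hseq'⟩, habs'⟩ := hm'
  rw [abs_le] at habs habs'
  have hm : ((α, ν2) : ℤ × ℤ) ∈ {w : ℤ × ℤ | w.1 ∈ {ν : ℤ | ∃ t : ℕ, t ≤ p ∧ ν = α + 2 * (t : ℤ)} ∧
      w.2 ∈ {ν : ℤ | ∃ t : ℕ, t ≤ q ∧ ν = β + 2 * (t : ℤ)} ∧ |w.1 + ε * w.2 + x| ≤ y} :=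
    ⟨⟨0, Nat.zero_le _, by push_cast; ring⟩, ⟨s, hs, hseq⟩, by rw [abs_le]; exact habs⟩
  have hm' : ((α + 2 * (p : ℤ), ν2') : ℤ × ℤ) ∈ {w : ℤ × ℤ | w.1 ∈ {ν : ℤ | ∃ t : ℕ, t ≤ p ∧ ν = α + 2 * (t : ℤ)} ∧
      w.2 ∈ {ν : ℤ | ∃ t : ℕ, t ≤ q ∧ ν = β + 2 * (t : ℤ)} ∧ |w.1 + ε * w.2 + x| ≤ y} :=
    ⟨⟨p, le_rfl, rfl⟩, ⟨s', hs', hseq'⟩, by rw [abs_le]; exact habs'⟩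
  rcases hε with rfl | rfl
  · -- ε = 1
    -- Step 1: the value at the left column is exactly y
    have h1 : α + 1 * ν2 + x = y := by
      by_contra hne
      exact (hcon' α ν2 hm).1
        ⟨⟨1, hp, by push_cast; ring⟩, ⟨s, hs, hseq⟩, by rw [abs_le]; constructor <;> omega⟩
    -- Step 2: the value at the right column is exactly -y
    have h2 : α + 2 * (p : ℤ) + 1 * ν2' + x = -y := by
      by_contra hne
      have hw : ((α + 2 * (p : ℤ) - 2, ν2') : ℤ × ℤ) ∈ {w : ℤ × ℤ | w.1 ∈ {ν : ℤ | ∃ t : ℕ, t ≤ p ∧ ν = α + 2 * (t : ℤ)} ∧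
          w.2 ∈ {ν : ℤ | ∃ t : ℕ, t ≤ q ∧ ν = β + 2 * (t : ℤ)} ∧ |w.1 + 1 * w.2 + x| ≤ y} :=
        ⟨⟨p - 1, by omega, by push_cast; omega⟩, ⟨s', hs', hseq'⟩, by rw [abs_le]; constructor <;> omega⟩
      exact (hcon' _ _ hw).1
        ⟨⟨p, le_rfl, by push_cast; ring⟩, ⟨s', hs', hseq'⟩, by rw [abs_le]; constructor <;> omega⟩
    -- Step 3: ν2 is at the bottom of N2
    have h3 : s = 0 := by
      by_contra hne
      have hw : ((α, ν2 - 2) : ℤ × ℤ) ∈ {w : ℤ × ℤ | w.1 ∈ {ν : ℤ | ∃ t : ℕ, t ≤ p ∧ ν = α + 2 * (t : ℤ)} ∧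
          w.2 ∈ {ν : ℤ | ∃ t : ℕ, t ≤ q ∧ ν = β + 2 * (t : ℤ)} ∧ |w.1 + 1 * w.2 + x| ≤ y} :=
        ⟨⟨0, Nat.zero_le _, by push_cast; ring⟩, ⟨s - 1, by omega, by push_cast; omega⟩,
          by rw [abs_le]; constructor <;> omega⟩
      exact (hcon' _ _ hw).2
        ⟨⟨0, Nat.zero_le _, by push_cast; ring⟩, ⟨s, hs, by omega⟩, by rw [abs_le]; constructor <;> omega⟩
    omega
  · -- ε = -1
    have h1 : α + (-1) * ν2 + x = y := by
      by_contra hne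
      exact (hcon' α ν2 hm).1
        ⟨⟨1, hp, by push_cast; ring⟩, ⟨s, hs, hseq⟩, by rw [abs_le]; constructor <;> omega⟩
    have h2 : α + 2 * (p : ℤ) + (-1) * ν2' + x = -y := by
      by_contra hne
      have hw : ((α + 2 * (p : ℤ) - 2, ν2') : ℤ × ℤ) ∈ {w : ℤ × ℤ | w.1 ∈ {ν : ℤ | ∃ t : ℕ, t ≤ p ∧ ν = α + 2 * (t : ℤ)} ∧
          w.2 ∈ {ν : ℤ | ∃ t : ℕ, t ≤ q ∧ ν = β + 2 * (t : ℤ)} ∧ |w.1 + (-1) * w.2 + x| ≤ y} :=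
        ⟨⟨p - 1, by omega, by push_cast; omega⟩, ⟨s', hs', hseq'⟩, by rw [abs_le]; constructor <;> omega⟩
      exact (hcon' _ _ hw).1
        ⟨⟨p, le_rfl, by push_cast; ring⟩, ⟨s', hs', hseq'⟩, by rw [abs_le]; constructor <;> omega⟩
    -- ν2 is at the top of N2
    have h3 : s = q := by
      by_contra hne
      exact (hcon' α ν2 hm).2
        ⟨⟨0, Nat.zero_le _, by push_cast; ring⟩, ⟨s + 1, by omega, by push_cast; omega⟩,
          by rw [abs_le]; constructor <;> omega⟩
    omega
end

section
/- Let 𝒮 be a homogeneous extended multi-segment belonging to Rep. Then there exists a unique standard homogeneous extended multi-segment in the reordering class [𝒮]. -/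
namespace Stmt14Aux

lemma segExt {s t : ExtSeg} (h1 : s.A = t.A) (h2 : s.B = t.B) (h3 : s.mu = t.mu) :
    s = t := by cases s; cases t; simp_all

@[simp] lemma mk_A (a b : ℚ) (c : ℤ) : (ExtSeg.mk a b c).A = a := rfl
@[simp] lemma mk_B (a b : ℚ) (c : ℤ) : (ExtSeg.mk a b c).B = b := rfl
@[simp] lemma mk_mu (a b : ℚ) (c : ℤ) : (ExtSeg.mk a b c).mu = c := rfl

/-- The strict key order: `u` must come strictly before `v` in standard order. -/
def klt (u v : ExtSeg) : Prop := u.B < v.B ∨ (u.B = v.B ∧ v.A < u.A)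

instance (u v : ExtSeg) : Decidable (klt u v) := by unfold klt; infer_instance

lemma klt_irrefl (u : ExtSeg) : ¬ klt u u := by simp [klt]

lemma klt_asymm {u v : ExtSeg} (h : klt u v) : ¬ klt v u := by
  rcases h with h | ⟨h1, h2⟩ <;> rintro (h' | ⟨h1', h2'⟩) <;> linarith

lemma klt_trans {u v w : ExtSeg} (h : klt u v) (h' : klt v w) : klt u w := by
  rcases h with h | ⟨h1, h2⟩ <;> rcases h' with h' | ⟨h1', h2'⟩
  · exact Or.inl (lt_trans h h')
  · exact Or.inl (h1' ▸ h)
  · exact Or.inl (h1 ▸ h')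
  · exact Or.inr ⟨h1.trans h1', lt_trans h2' h2⟩

lemma key_eq_of_not {u v : ExtSeg} (h : ¬ klt u v) (h' : ¬ klt v u) :
    u.B = v.B ∧ u.A = v.A := by
  unfold klt at h h'
  push_neg at h h'
  have hB : u.B = v.B := le_antisymm h'.1 h.1
  exact ⟨hB, le_antisymm (h.2 hB) (h'.2 hB.symm)⟩

lemma klt_iff_of_eq {a a' b b' : ExtSeg} (h1 : a.A = a'.A) (h2 : a.B = a'.B)
    (h3 : b.A = b'.A) (h4 : b.B = b'.B) : klt a b ↔ klt a' b' := by
  unfold klt; rw [h1, h2, h3, h4]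

/-- The sorting swap at position `i` (the case-1 reorder). -/
def sw (T : ℕ → ExtSeg) (i : ℕ) : ℕ → ExtSeg :=
  swapAt T i ⟨(T (i+1)).A, (T (i+1)).B, 2 * (T i).mu - (T (i+1)).mu⟩
             ⟨(T i).A, (T i).B, (T i).mu⟩

lemma sw_at_i (T : ℕ → ExtSeg) (i : ℕ) :
    sw T i i = ⟨(T (i+1)).A, (T (i+1)).B, 2 * (T i).mu - (T (i+1)).mu⟩ := by
  unfold sw swapAt; rw [if_pos rfl]

lemma sw_at_i1 (T : ℕ → ExtSeg) (i : ℕ) : sw T i (i+1) = T i := by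
  unfold sw swapAt
  rw [if_neg (by omega : ¬ (i+1 = i)), if_pos rfl]

lemma sw_at_other (T : ℕ → ExtSeg) (i j : ℕ) (h1 : j ≠ i) (h2 : j ≠ i+1) :
    sw T i j = T j := by
  unfold sw swapAt; rw [if_neg h1, if_neg h2]

/-- The transposition of `i` and `i+1`. -/
def tr (i j : ℕ) : ℕ := if j = i then i + 1 else if j = i + 1 then i else j

lemma tr_lt {n : ℕ} (i j : ℕ) (hi : i + 1 < n) (hj : j < n) : tr i j < n := by
  unfold tr; split_ifs <;> omega

lemma tr_self (i : ℕ) : tr i i = i + 1 := by unfold tr; split_ifs <;> omega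

lemma tr_succ (i : ℕ) : tr i (i+1) = i := by unfold tr; split_ifs <;> omega

lemma tr_invol (i j : ℕ) : tr i (tr i j) = j := by unfold tr; split_ifs <;> omega

lemma tr_lt_tr {i p q : ℕ} (h : p < q) (hne : ¬(p = i ∧ q = i+1)) :
    tr i p < tr i q := by
  unfold tr; split_ifs <;> omega

lemma swapAt_AB {T : ℕ → ExtSeg} {i : ℕ} {x y : ExtSeg}
    (hx : x.A = (T (i+1)).A ∧ x.B = (T (i+1)).B)
    (hy : y.A = (T i).A ∧ y.B = (T i).B) (j : ℕ) :
    (swapAt T i x y j).A = (T (tr i j)).A ∧ (swapAt T i x y j).B = (T (tr i j)).B := by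
  unfold swapAt tr; split_ifs <;> simp_all

/-- Admissible order (the last clause of `IsFormalEMS`). -/
def AdmOrd (n : ℕ) (T : ℕ → ExtSeg) : Prop :=
  ∀ i, i < n → ∀ j, j < n → (T j).A < (T i).A → (T j).B < (T i).B → j < i

lemma admOrd_pattern {n : ℕ} {T T' : ℕ → ExtSeg} {i : ℕ}
    (h : AdmOrd n T) (hi : i + 1 < n)
    (hAB : ∀ j, (T' j).A = (T (tr i j)).A ∧ (T' j).B = (T (tr i j)).B)
    (hpair : ¬ ((T i).A < (T (i+1)).A ∧ (T i).B < (T (i+1)).B)) :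
    AdmOrd n T' := by
  intro p hp q hq hA hB
  rw [(hAB p).1, (hAB q).1] at hA
  rw [(hAB p).2, (hAB q).2] at hB
  have htr : tr i q < tr i p := h _ (tr_lt i p hi hp) _ (tr_lt i q hi hq) hA hB
  by_contra hc
  push_neg at hc
  rcases eq_or_lt_of_le hc with rfl | hpq
  · exact absurd htr (lt_irrefl _)
  · by_cases hip : p = i ∧ q = i + 1
    · obtain ⟨rfl, rfl⟩ := hip
      rw [tr_self, tr_succ] at hA hB
      exact hpair ⟨hA, hB⟩
    · exact absurd (tr_lt_tr hpq hip) (by omega)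

lemma admOrd_reorderStep {n : ℕ} {T T' : ℕ → ExtSeg}
    (h : AdmOrd n T) (hs : ReorderStep n T T') : AdmOrd n T' := by
  obtain ⟨i, hi, hc⟩ := hs
  rcases hc with ⟨hA, hB, rfl⟩ | ⟨hA, hB, rfl⟩ | ⟨hA, hB, rfl⟩
  · exact admOrd_pattern h hi (swapAt_AB ⟨rfl, rfl⟩ ⟨rfl, rfl⟩)
      (fun hh => absurd hh.2 (not_lt.2 hB))
  · exact admOrd_pattern h hi (swapAt_AB ⟨rfl, rfl⟩ ⟨rfl, rfl⟩)
      (fun hh => absurd hh.1 (not_lt.2 hA))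
  · exact h

/-- A sorting step: apply the case-1 reorder at a strictly out-of-order adjacent pair. -/
def SStep (n : ℕ) (T T' : ℕ → ExtSeg) : Prop :=
  ∃ i, i + 1 < n ∧ klt (T (i+1)) (T i) ∧ (T i).A ≤ (T (i+1)).A ∧ T' = sw T i

def SStar (n : ℕ) : (ℕ → ExtSeg) → (ℕ → ExtSeg) → Prop :=
  Relation.ReflTransGen (SStep n)

lemma sstep_reorderStep {n : ℕ} {T T' : ℕ → ExtSeg} (h : SStep n T T') :
    ReorderStep n T T' := by
  obtain ⟨i, hi, hlt, hA, rfl⟩ := h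
  refine ⟨i, hi, Or.inl ⟨hA, ?_, rfl⟩⟩
  rcases hlt with h | ⟨h, _⟩
  exacts [h.le, h.le]

lemma admOrd_sstep {n : ℕ} {T T' : ℕ → ExtSeg} (h : AdmOrd n T) (hs : SStep n T T') :
    AdmOrd n T' :=
  admOrd_reorderStep h (sstep_reorderStep hs)

end Stmt14Aux

namespace Stmt14Aux

/-- Number of inversions among the first `n` entries. -/
def invCount (n : ℕ) (T : ℕ → ExtSeg) : ℕ :=
  ((Finset.range n ×ˢ Finset.range n).filter
    (fun p => p.1 < p.2 ∧ klt (T p.2) (T p.1))).card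

lemma invCount_pos {n : ℕ} {T : ℕ → ExtSeg} {i : ℕ} (hi : i + 1 < n)
    (hlt : klt (T (i+1)) (T i)) : 0 < invCount n T := by
  refine Finset.card_pos.2 ⟨(i, i+1), Finset.mem_filter.2 ⟨?_, ?_, hlt⟩⟩
  · exact Finset.mem_product.2 ⟨Finset.mem_range.2 (by omega), Finset.mem_range.2 hi⟩
  · omega

lemma sw_AB {T : ℕ → ExtSeg} {i : ℕ} (j : ℕ) :
    (sw T i j).A = (T (tr i j)).A ∧ (sw T i j).B = (T (tr i j)).B := by
  unfold sw
  refine swapAt_AB ?_ ?_ j <;> exact ⟨rfl, rfl⟩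

lemma invCount_sw {n : ℕ} {T : ℕ → ExtSeg} {i : ℕ} (hi : i + 1 < n)
    (hlt : klt (T (i+1)) (T i)) : invCount n (sw T i) < invCount n T := by
  classical
  have hmem : (i, i+1) ∈ (Finset.range n ×ˢ Finset.range n).filter
      (fun p => p.1 < p.2 ∧ klt (T p.2) (T p.1)) := by
    refine Finset.mem_filter.2 ⟨?_, ?_, hlt⟩
    · exact Finset.mem_product.2 ⟨Finset.mem_range.2 (by omega), Finset.mem_range.2 hi⟩
    · omega
  have hle : invCount n (sw T i) ≤
      (((Finset.range n ×ˢ Finset.range n).filter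
        (fun p => p.1 < p.2 ∧ klt (T p.2) (T p.1))).erase (i, i+1)).card := by
    refine Finset.card_le_card_of_injOn (fun p => (tr i p.1, tr i p.2)) ?_ ?_
    · intro p hp
      obtain ⟨hp1, hp2, hp3⟩ := Finset.mem_filter.1 hp
      obtain ⟨hr1, hr2⟩ := Finset.mem_product.1 hp1
      rw [Finset.mem_range] at hr1 hr2
      have hklt' : klt (T (tr i p.2)) (T (tr i p.1)) :=
        (klt_iff_of_eq (sw_AB p.2).1 (sw_AB p.2).2 (sw_AB p.1).1 (sw_AB p.1).2).mp hp3
      have hne : ¬ (p.1 = i ∧ p.2 = i + 1) := by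
        rintro ⟨h1, h2⟩
        rw [h1, h2, tr_self, tr_succ] at hklt'
        exact klt_asymm hlt hklt'
      refine Finset.mem_erase.2 ⟨?_, Finset.mem_filter.2 ⟨?_, ?_, hklt'⟩⟩
      · intro hcon
        simp only [Prod.mk.injEq] at hcon
        have e1 : p.1 = i + 1 := by rw [← tr_invol i p.1, hcon.1, tr_self]
        have e2 : p.2 = i := by rw [← tr_invol i p.2, hcon.2, tr_succ]
        omega
      · exact Finset.mem_product.2 ⟨Finset.mem_range.2 (tr_lt i p.1 hi hr1),
          Finset.mem_range.2 (tr_lt i p.2 hi hr2)⟩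
      · exact tr_lt_tr hp2 hne
    · intro a _ b _ hab
      simp only [Prod.mk.injEq] at hab
      have h1 : tr i (tr i a.1) = tr i (tr i b.1) := by rw [hab.1]
      have h2 : tr i (tr i a.2) = tr i (tr i b.2) := by rw [hab.2]
      rw [tr_invol, tr_invol] at h1 h2
      exact Prod.ext h1 h2
  calc invCount n (sw T i) ≤ _ := hle
    _ < _ := Finset.card_erase_lt_of_mem hmem

lemma invCount_sstep {n : ℕ} {T T' : ℕ → ExtSeg} (h : SStep n T T') :
    invCount n T' < invCount n T := by
  obtain ⟨i, hi, hlt, _, rfl⟩ := h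
  exact invCount_sw hi hlt

lemma adj_of_pair {n : ℕ} {T : ℕ → ExtSeg} :
    ∀ d q p, p < n → q < p → p - q ≤ d → klt (T p) (T q) →
      ∃ i, i + 1 < n ∧ klt (T (i+1)) (T i) := by
  intro d
  induction d with
  | zero => intro q p hp hqp hd _; omega
  | succ d ih =>
    intro q p hp hqp hd hlt
    by_cases hadj : p = q + 1
    · exact ⟨q, by omega, by rw [← hadj]; exact hlt⟩
    · by_cases h2 : klt (T (q+1)) (T q)
      · exact ⟨q, by omega, h2⟩
      · have h3 : klt (T p) (T (q+1)) := by
          by_cases h4 : klt (T q) (T (q+1))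
          · exact klt_trans hlt h4
          · obtain ⟨hBe, hAe⟩ := key_eq_of_not h2 h4
            exact (klt_iff_of_eq rfl rfl hAe hBe).mpr hlt
        exact ih (q+1) p hp (by omega) (by omega) h3

lemma adj_of_not_std {n : ℕ} {T : ℕ → ExtSeg} (h : ¬ IsStandard n T) :
    ∃ i, i + 1 < n ∧ klt (T (i+1)) (T i) := by
  unfold IsStandard at h
  push_neg at h
  obtain ⟨p, hp, q, hq, hP, hle⟩ := h
  have hlt : klt (T p) (T q) := hP
  rcases eq_or_lt_of_le hle with rfl | hqp
  · exact absurd hlt (klt_irrefl _)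
  · exact adj_of_pair (p - q) q p hp hqp le_rfl hlt

lemma sstep_of_adj {n : ℕ} {T : ℕ → ExtSeg} {i : ℕ} (hadm : AdmOrd n T)
    (hi : i + 1 < n) (hlt : klt (T (i+1)) (T i)) : SStep n T (sw T i) := by
  refine ⟨i, hi, hlt, ?_, rfl⟩
  by_contra hc
  push_neg at hc
  have hB : (T (i+1)).B < (T i).B := by
    rcases hlt with h | ⟨h, h2⟩
    · exact h
    · linarith
  have := hadm i (by omega) (i+1) hi hc hB
  omega

lemma exists_std (n : ℕ) : ∀ N T, invCount n T ≤ N → AdmOrd n T →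
    ∃ T', SStar n T T' ∧ IsStandard n T' := by
  intro N
  induction N with
  | zero =>
    intro T hN hadm
    by_cases hstd : IsStandard n T
    · exact ⟨T, Relation.ReflTransGen.refl, hstd⟩
    · obtain ⟨i, hi, hlt⟩ := adj_of_not_std hstd
      exact absurd (invCount_pos hi hlt) (by omega)
  | succ N ih =>
    intro T hN hadm
    by_cases hstd : IsStandard n T
    · exact ⟨T, Relation.ReflTransGen.refl, hstd⟩
    · obtain ⟨i, hi, hlt⟩ := adj_of_not_std hstd
      have hs : SStep n T (sw T i) := sstep_of_adj hadm hi hlt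
      obtain ⟨T', hstar, hstd'⟩ := ih (sw T i)
        (by have := invCount_sw hi hlt; omega) (admOrd_sstep hadm hs)
      exact ⟨T', Relation.ReflTransGen.head hs hstar, hstd'⟩

end Stmt14Aux

namespace Stmt14Aux

lemma sw_comm {T : ℕ → ExtSeg} {i j : ℕ} (h : i + 2 ≤ j) :
    sw (sw T i) j = sw (sw T j) i := by
  funext k
  simp only [sw, swapAt]
  split_ifs <;> first | rfl | omega

lemma sw_braid (T : ℕ → ExtSeg) (i : ℕ) :
    sw (sw (sw T i) (i+1)) i = sw (sw (sw T (i+1)) i) (i+1) := by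
  funext k
  simp only [sw, swapAt]
  split_ifs <;>
    first
      | rfl
      | omega
      | (apply segExt <;> simp <;> ring)

lemma local_conf_aux {n : ℕ} (T : ℕ → ExtSeg) {i j : ℕ} (hij : i ≤ j)
    (hi : i + 1 < n) (hj : j + 1 < n)
    (hlti : klt (T (i+1)) (T i)) (hAi : (T i).A ≤ (T (i+1)).A)
    (hltj : klt (T (j+1)) (T j)) (hAj : (T j).A ≤ (T (j+1)).A) :
    ∃ W, SStar n (sw T i) W ∧ SStar n (sw T j) W := by
  rcases eq_or_lt_of_le hij with rfl | hlt
  · exact ⟨sw T i, Relation.ReflTransGen.refl, Relation.ReflTransGen.refl⟩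
  by_cases hb : j = i + 1
  · subst hb
    -- braid case
    have e2 : i + 1 + 1 = i + 2 := rfl
    have hU1 : sw T i (i+1) = T i := sw_at_i1 T i
    have hU2 : sw T i (i+2) = T (i+2) := sw_at_other T i (i+2) (by omega) (by omega)
    have hU0 : sw T i i = ⟨(T (i+1)).A, (T (i+1)).B, 2 * (T i).mu - (T (i+1)).mu⟩ :=
      sw_at_i T i
    have hltz : klt (T (i+2)) (T i) := klt_trans hltj hlti
    have s1 : SStep n (sw T i) (sw (sw T i) (i+1)) := by
      refine ⟨i+1, hj, ?_, ?_, rfl⟩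
      · rw [e2, hU1, hU2]; exact hltz
      · rw [e2, hU1, hU2]; exact le_trans hAi hAj
    have s2 : SStep n (sw (sw T i) (i+1)) (sw (sw (sw T i) (i+1)) i) := by
      have hv0 : sw (sw T i) (i+1) i = sw T i i :=
        sw_at_other (sw T i) (i+1) i (by omega) (by omega)
      have hv1 : sw (sw T i) (i+1) (i+1) =
          ⟨(sw T i (i+2)).A, (sw T i (i+2)).B,
            2 * (sw T i (i+1)).mu - (sw T i (i+2)).mu⟩ := sw_at_i (sw T i) (i+1)
      refine ⟨i, hi, ?_, ?_, rfl⟩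
      · rw [hv0, hv1, hU0, hU2]
        exact (klt_iff_of_eq rfl rfl rfl rfl).mpr hltj
      · rw [hv0, hv1, hU0, hU2]
        exact hAj
    -- V side
    have hV0 : sw T (i+1) i = T i := sw_at_other T (i+1) i (by omega) (by omega)
    have hV1 : sw T (i+1) (i+1) =
        ⟨(T (i+2)).A, (T (i+2)).B, 2 * (T (i+1)).mu - (T (i+2)).mu⟩ := by
      have := sw_at_i T (i+1); rw [e2] at this; exact this
    have hV2 : sw T (i+1) (i+2) = T (i+1) := by
      have := sw_at_i1 T (i+1); rw [e2] at this; exact this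
    have s1' : SStep n (sw T (i+1)) (sw (sw T (i+1)) i) := by
      refine ⟨i, hi, ?_, ?_, rfl⟩
      · rw [hV0, hV1]; exact (klt_iff_of_eq rfl rfl rfl rfl).mpr hltz
      · rw [hV0, hV1]; exact le_trans hAi hAj
    have s2' : SStep n (sw (sw T (i+1)) i) (sw (sw (sw T (i+1)) i) (i+1)) := by
      have hw1 : sw (sw T (i+1)) i (i+1) = sw T (i+1) i := sw_at_i1 (sw T (i+1)) i
      have hw2 : sw (sw T (i+1)) i (i+2) = sw T (i+1) (i+2) :=
        sw_at_other (sw T (i+1)) i (i+2) (by omega) (by omega)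
      refine ⟨i+1, hj, ?_, ?_, rfl⟩
      · rw [e2, hw1, hw2, hV0, hV2]; exact hlti
      · rw [e2, hw1, hw2, hV0, hV2]; exact hAi
    refine ⟨sw (sw (sw T i) (i+1)) i,
      Relation.ReflTransGen.head s1 (Relation.ReflTransGen.single s2), ?_⟩
    rw [sw_braid]
    exact Relation.ReflTransGen.head s1' (Relation.ReflTransGen.single s2')
  · -- disjoint case
    have hj2 : i + 2 ≤ j := by omega
    have s1 : SStep n (sw T i) (sw (sw T i) j) := by
      refine ⟨j, hj, ?_, ?_, rfl⟩
      · rw [sw_at_other T i j (by omega) (by omega),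
          sw_at_other T i (j+1) (by omega) (by omega)]
        exact hltj
      · rw [sw_at_other T i j (by omega) (by omega),
          sw_at_other T i (j+1) (by omega) (by omega)]
        exact hAj
    have s2 : SStep n (sw T j) (sw (sw T j) i) := by
      refine ⟨i, hi, ?_, ?_, rfl⟩
      · rw [sw_at_other T j i (by omega) (by omega),
          sw_at_other T j (i+1) (by omega) (by omega)]
        exact hlti
      · rw [sw_at_other T j i (by omega) (by omega),
          sw_at_other T j (i+1) (by omega) (by omega)]
        exact hAi
    refine ⟨sw (sw T i) j, Relation.ReflTransGen.single s1, ?_⟩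
    rw [sw_comm hj2]
    exact Relation.ReflTransGen.single s2

lemma local_conf {n : ℕ} {T U V : ℕ → ExtSeg} (h1 : SStep n T U) (h2 : SStep n T V) :
    ∃ W, SStar n U W ∧ SStar n V W := by
  obtain ⟨i, hi, hlti, hAi, rfl⟩ := h1
  obtain ⟨j, hj, hltj, hAj, rfl⟩ := h2
  rcases le_total i j with h | h
  · exact local_conf_aux T h hi hj hlti hAi hltj hAj
  · obtain ⟨W, ha, hb⟩ := local_conf_aux T h hj hi hltj hAj hlti hAi
    exact ⟨W, hb, ha⟩

lemma newman (n : ℕ) : ∀ N T U V, invCount n T ≤ N → SStar n T U → SStar n T V →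
    ∃ W, SStar n U W ∧ SStar n V W := by
  intro N
  induction N with
  | zero =>
    intro T U V hN hU hV
    rcases Relation.ReflTransGen.cases_head hU with rfl | ⟨U₁, s, _⟩
    · exact ⟨V, hV, Relation.ReflTransGen.refl⟩
    · obtain ⟨i, hi, hlt, -, -⟩ := s
      exact absurd (invCount_pos hi hlt) (by omega)
  | succ N ih =>
    intro T U V hN hU hV
    rcases Relation.ReflTransGen.cases_head hU with rfl | ⟨U₁, sU, hU₁⟩
    · exact ⟨V, hV, Relation.ReflTransGen.refl⟩
    rcases Relation.ReflTransGen.cases_head hV with rfl | ⟨V₁, sV, hV₁⟩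
    · exact ⟨U, Relation.ReflTransGen.refl, hU⟩
    obtain ⟨C, hU₁C, hV₁C⟩ := local_conf sU sV
    have hinvU : invCount n U₁ ≤ N := by have := invCount_sstep sU; omega
    have hinvV : invCount n V₁ ≤ N := by have := invCount_sstep sV; omega
    obtain ⟨D, hUD, hCD⟩ := ih U₁ U C hinvU hU₁ hU₁C
    obtain ⟨W, hVW, hDW⟩ := ih V₁ V D hinvV hV₁ (hV₁C.trans hCD)
    exact ⟨W, hUD.trans hDW, hVW⟩

end Stmt14Aux

namespace Stmt14Aux

lemma nec_mu_eq {n : ℕ} {T : ℕ → ExtSeg} {i : ℕ} (hnec : Nec n T) (hi : i + 1 < n)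
    (hA : (T (i+1)).A = (T i).A) (hB : (T (i+1)).B = (T i).B) :
    (T (i+1)).mu = (T i).mu := by
  have h := hnec i hi
  rw [hA, hB] at h
  simp only [sub_self, abs_zero, add_zero] at h
  have h2 : ((T (i+1)).mu : ℚ) - ((T i).mu : ℚ) = 0 := abs_nonpos_iff.mp h
  have h3 : ((T (i+1)).mu : ℚ) = ((T i).mu : ℚ) := by linarith
  exact_mod_cast h3

lemma swapAt_eq_self {T : ℕ → ExtSeg} {i : ℕ} : swapAt T i (T i) (T (i+1)) = T := by
  funext j
  unfold swapAt
  split_ifs with h1 h2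
  · rw [h1]
  · rw [h2]
  · rfl

lemma reorderStep_tri {n : ℕ} {T T' : ℕ → ExtSeg} (hnec : Nec n T)
    (h : ReorderStep n T T') : T' = T ∨ SStep n T T' ∨ SStep n T' T := by
  obtain ⟨i, hi, hc⟩ := h
  rcases hc with ⟨hA, hB, rfl⟩ | ⟨hA, hB, rfl⟩ | ⟨hA, hB, rfl⟩
  · by_cases heq : (T (i+1)).B = (T i).B ∧ (T (i+1)).A = (T i).A
    · left
      have hmu := nec_mu_eq hnec hi heq.2 heq.1
      have hx : (⟨(T (i+1)).A, (T (i+1)).B, 2 * (T i).mu - (T (i+1)).mu⟩ : ExtSeg) = T i :=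
        segExt (by simpa using heq.2) (by simpa using heq.1) (by simp [hmu]; ring)
      have hy : (⟨(T i).A, (T i).B, (T i).mu⟩ : ExtSeg) = T (i+1) :=
        segExt (by simpa using heq.2.symm) (by simpa using heq.1.symm)
          (by simpa using hmu.symm)
      rw [hx, hy, swapAt_eq_self]
    · right; left
      refine ⟨i, hi, ?_, hA, rfl⟩
      rcases lt_or_eq_of_le hB with h | h
      · exact Or.inl h
      · refine Or.inr ⟨h, lt_of_le_of_ne hA ?_⟩
        intro hAA
        exact heq ⟨h, hAA.symm⟩
  · by_cases heq : (T (i+1)).B = (T i).B ∧ (T (i+1)).A = (T i).A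
    · left
      have hmu := nec_mu_eq hnec hi heq.2 heq.1
      have hx : (⟨(T (i+1)).A, (T (i+1)).B, (T (i+1)).mu⟩ : ExtSeg) = T i :=
        segExt (by simpa using heq.2) (by simpa using heq.1) (by simpa using hmu)
      have hy : (⟨(T i).A, (T i).B, 2 * (T (i+1)).mu - (T i).mu⟩ : ExtSeg) = T (i+1) :=
        segExt (by simpa using heq.2.symm) (by simpa using heq.1.symm)
          (by simp [hmu]; ring)
      rw [hx, hy, swapAt_eq_self]
    · right; right
      have hXi : swapAt T i ⟨(T (i+1)).A, (T (i+1)).B, (T (i+1)).mu⟩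
          ⟨(T i).A, (T i).B, 2 * (T (i+1)).mu - (T i).mu⟩ i =
          ⟨(T (i+1)).A, (T (i+1)).B, (T (i+1)).mu⟩ := by
        unfold swapAt; rw [if_pos rfl]
      have hXi1 : swapAt T i ⟨(T (i+1)).A, (T (i+1)).B, (T (i+1)).mu⟩
          ⟨(T i).A, (T i).B, 2 * (T (i+1)).mu - (T i).mu⟩ (i+1) =
          ⟨(T i).A, (T i).B, 2 * (T (i+1)).mu - (T i).mu⟩ := by
        unfold swapAt; rw [if_neg (by omega : ¬ (i+1 = i)), if_pos rfl]
      refine ⟨i, hi, ?_, ?_, ?_⟩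
      · rw [hXi, hXi1]
        rcases lt_or_eq_of_le hB with h | h
        · exact Or.inl (by simpa using h)
        · refine Or.inr ⟨by simpa using h, ?_⟩
          simp only [mk_A]
          refine lt_of_le_of_ne hA ?_
          intro hAA
          exact heq ⟨h.symm, hAA⟩
      · rw [hXi, hXi1]
        simpa using hA
      · funext k
        by_cases h1 : k = i
        · subst h1
          rw [sw_at_i, hXi, hXi1]
          symm
          apply segExt
          · rfl
          · rfl
          · simp only [mk_mu]; ring
        · by_cases h2 : k = i + 1
          · subst h2
            rw [sw_at_i1, hXi]
          · rw [sw_at_other _ _ _ h1 h2]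
            unfold swapAt
            rw [if_neg h1, if_neg h2]
  · left; rfl

lemma reorder_joins {n : ℕ} {S : ℕ → ExtSeg}
    (hnec : ∀ V, Reorder n S V → Nec n V) :
    ∀ U, Reorder n S U → ∃ W, SStar n S W ∧ SStar n U W := by
  intro U hU
  induction hU with
  | refl => exact ⟨S, Relation.ReflTransGen.refl, Relation.ReflTransGen.refl⟩
  | tail hab hbc ih =>
    obtain ⟨W1, hSW1, hbW1⟩ := ih
    have hnecb := hnec _ hab
    rcases reorderStep_tri hnecb hbc with heq | hs | hs
    · exact heq ▸ ⟨W1, hSW1, hbW1⟩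
    · obtain ⟨X, hW1X, hcX⟩ := newman n (invCount n _) _ W1 _ le_rfl hbW1
        (Relation.ReflTransGen.single hs)
      exact ⟨X, hSW1.trans hW1X, hcX⟩
    · exact ⟨W1, hSW1, Relation.ReflTransGen.head hs hbW1⟩

lemma std_star_eq {n : ℕ} {T X : ℕ → ExtSeg} (hstd : IsStandard n T)
    (h : SStar n T X) : T = X := by
  rcases Relation.ReflTransGen.cases_head h with rfl | ⟨c, s, -⟩
  · rfl
  · obtain ⟨i, hi, hlt, -, -⟩ := s
    have := hstd (i+1) hi i (by omega) hlt
    omega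

end Stmt14Aux

open Stmt14Aux

/-- Existence and uniqueness of the standard form: every homogeneous extended
multi-segment in `Rep` has a unique standard reordering. -/
theorem stmt_14 (n : ℕ) (S : ℕ → ExtSeg) (h : InRep n S) :
    ∃! S', Reorder n S S' ∧ IsStandard n S' := by
  obtain ⟨⟨⟨-, -, -, -, -, hadm⟩, -⟩, -, hnec, -⟩ := h
  have hadm' : AdmOrd n S := hadm
  obtain ⟨S', hstar, hstd⟩ := exists_std n (invCount n S) S le_rfl hadm'
  have hreo : Reorder n S S' :=
    Relation.ReflTransGen.mono (fun _ _ hs => sstep_reorderStep hs) _ _ hstar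
  refine ⟨S', ⟨hreo, hstd⟩, ?_⟩
  rintro Y ⟨hSY, hstdY⟩
  obtain ⟨W, hSW, hYW⟩ := reorder_joins hnec Y hSY
  obtain ⟨X, hS'X, hWX⟩ := newman n (invCount n S) S S' W le_rfl hstar hSW
  have h1 : Y = X := std_star_eq hstdY (hYW.trans hWX)
  have h2 : S' = X := std_star_eq hstd hS'X
  rw [h1, ← h2]
end
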